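/- arXiv:1212.6973 — 4 statements merged into one kernel-verified Lean document; each statement's English description precedes it below -/
import Mathlib

section
/- Let Ω ⊂ ℝ² be a bounded open set and let μ = Σ_{z∈Z} v_z δ_z be an atomic measure with finite support Z ⊂ Ω, all v_z > 0, and μ(Ω) = |Ω| (Lebesgue area). Then the minimal linear transport cost min{ ∫_Ω |x − T(x)| dx : T: Ω → Z measurable with |T⁻¹({z})| = μ({z}) for all z ∈ Z } equals sup{ ∫_Ω φ dμ : φ: Ω → ℝ is 1-Lipschitz and ∫_Ω φ(x) dx = 0 }. -/
/-!
Weak duality: if `T` is a transport map and `φ` is 1-Lipschitz with mean zero, then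
`∑ v_z φ(z) = ∫_Ω (φ(T x) - φ(x)) dx ≤ ∫_Ω |x - T x| dx`.

Strong duality is semi-discrete optimal transport. The dual functional
`G(ψ) = ∑ v_z ψ_z + ∫_Ω min_z (|x - z| - ψ_z) dx` is invariant under adding a constant to `ψ`
and decays linearly in the oscillation of `ψ`, so it attains its maximum. The tie sets
`{|x - z| - |x - z'| = const}` are branches of hyperbolas (or lines and rays), hence null, so `G`
is differentiable with `∂G/∂ψ_z = v_z - |{x : z minimises |x - z| - ψ_z}|`; at the maximum, a
measurable choice `T x` of a minimiser is therefore a transport map. Its cost is `G(ψ)`, and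
`φ(x) = -min_z (|x - z| - ψ_z)`, shifted to mean zero, is 1-Lipschitz with
`∑ v_z φ(z) ≥ G(ψ)` because `φ(z) ≥ ψ_z`.
-/

open MeasureTheory Real Filter
open scoped ENNReal RealInnerProductSpace

noncomputable section

/-- The plane `ℝ²`. -/
abbrev Plane := EuclideanSpace ℝ (Fin 2)

/-- The point `(a, b)` of the plane. -/
def mk2 (a b : ℝ) : Plane := (WithLp.equiv 2 (Fin 2 → ℝ)).symm ![a, b]

/-- The constant `c₆ = 5√3/54`. -/
def c6 : ℝ := 5 * Real.sqrt 3 / 54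

/-- The volume `V_λ = (2c₆/λ)^(2/3)` of the scaled domain. -/
def Vlam (lam : ℝ) : ℝ := (2 * c6 / lam) ^ ((2 : ℝ) / 3)

/-- The scaled domain `Ω_λ = V_λ^(1/2)·Ω`. -/
def scaledDomain (lam : ℝ) (Omega : Set Plane) : Set Plane :=
  (fun x : Plane => Real.sqrt (Vlam lam) • x) '' Omega

/-- An admissible atomic measure on `Ω_λ`, encoded by its finite support `Z ⊆ Ω_λ` and
its weights `v`, which are positive on `Z` and of total mass `V_λ`. -/
def Admissible (lam : ℝ) (Omlam : Set Plane) (Z : Finset Plane) (v : Plane → ℝ) : Prop :=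
  (↑Z : Set Plane) ⊆ Omlam ∧ (∀ z ∈ Z, 0 < v z) ∧ ∑ z ∈ Z, v z = Vlam lam

/-- A transport map between the Lebesgue measure on `Ω_λ` and the atomic measure `(Z, v)`:
a measurable map `T : Ω_λ → Z` with `|T⁻¹({z})| = v z` for all `z ∈ Z`. -/
def IsTransportMap (Omlam : Set Plane) (Z : Finset Plane) (v : Plane → ℝ)
    (T : Plane → Plane) : Prop :=
  Measurable T ∧ (∀ x ∈ Omlam, T x ∈ Z) ∧
    ∀ z ∈ Z, (volume {x | x ∈ Omlam ∧ T x = z}).toReal = v z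

/-- The quadratic optimal transport cost `W(L_{Ω_λ}, μ)`. -/
def transportCost (Omlam : Set Plane) (Z : Finset Plane) (v : Plane → ℝ) : ℝ :=
  sInf {c : ℝ | ∃ T : Plane → Plane, IsTransportMap Omlam Z v T ∧
    c = ∫ x in Omlam, ‖x - T x‖ ^ 2}

/-- The energy `E_λ(μ) = 2c₆ Σ_z v_z^(1/2) + W(L_{Ω_λ}, μ)`. -/
def energy (Omlam : Set Plane) (Z : Finset Plane) (v : Plane → ℝ) : ℝ :=
  2 * c6 * ∑ z ∈ Z, Real.sqrt (v z) + transportCost Omlam Z v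

/-- A convex polygon with at most `n` sides: a compact set with nonempty interior which is an
intersection of at most `n` closed half-planes. -/
def IsConvexPolygon (P : Set Plane) (n : ℕ) : Prop :=
  IsCompact P ∧ (interior P).Nonempty ∧
    ∃ H : Finset (Plane × ℝ), H.card ≤ n ∧ (∀ h ∈ H, h.1 ≠ 0) ∧
      P = {x : Plane | ∀ h ∈ H, ⟪h.1, x⟫ ≤ h.2}

open Topology Bornology Metric
open scoped NNReal

section FiniteInf

variable {ι : Type*} [Finite ι] [Nonempty ι]

theorem abs_ciInf_sub_ciInf_le {f g : ι → ℝ} {C : ℝ} (h : ∀ i, |f i - g i| ≤ C) :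
    |(⨅ i, f i) - ⨅ i, g i| ≤ C := by
  obtain ⟨i, hi⟩ := exists_eq_ciInf_of_finite (f := f)
  obtain ⟨j, hj⟩ := exists_eq_ciInf_of_finite (f := g)
  have hfj := ciInf_le (Finite.bddBelow_range f) j
  have hgi := ciInf_le (Finite.bddBelow_range g) i
  rw [abs_sub_le_iff]
  constructor
  · linarith [(abs_le.1 (h j)).2]
  · linarith [(abs_le.1 (h i)).1]

theorem ciInf_sub_const (f : ι → ℝ) (a : ℝ) : ⨅ i, (f i - a) = (⨅ i, f i) - a :=
  ((OrderIso.subRight a).map_ciInf (Finite.bddBelow_range f)).symm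

theorem eventually_ciInf_eq_of_lt {X : Type*} [TopologicalSpace X] {g : ι → X → ℝ} {x₀ : X}
    {i₀ : ι} (hg : ∀ i, ContinuousAt (g i) x₀) (hmin : ∀ i ≠ i₀, g i₀ x₀ < g i x₀) :
    ∀ᶠ x in 𝓝 x₀, ⨅ i, g i x = g i₀ x := by
  have hle : ∀ᶠ x in 𝓝 x₀, ∀ i, g i₀ x ≤ g i x := by
    refine eventually_all.2 fun i => ?_
    rcases eq_or_ne i i₀ with rfl | hi
    · exact Eventually.of_forall fun _ => le_rfl
    · exact ((hg i₀).eventually_lt (hg i) (hmin i hi)).mono fun _ h => h.le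
  filter_upwards [hle] with x hx
  exact le_antisymm (ciInf_le (Finite.bddBelow_range _) i₀) (le_ciInf hx)

end FiniteInf

theorem exists_measurable_argmin {X ι : Type*} [MeasurableSpace X] [MeasurableSpace ι] [Finite ι]
    [Nonempty ι] {k : ι → X → ℝ} (hk : ∀ i, Measurable (k i)) :
    ∃ τ : X → ι, Measurable τ ∧ ∀ x i, k (τ x) x ≤ k i x := by
  classical
  obtain ⟨e, he⟩ := exists_surjective_nat ι
  have hex : ∀ x, ∃ n, ∀ i, k (e n) x ≤ k i x := fun x => by
    obtain ⟨i, hi⟩ := Finite.exists_min fun i => k i x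
    obtain ⟨n, rfl⟩ := he i
    exact ⟨n, hi⟩
  refine ⟨fun x => e (Nat.find (hex x)), ?_, fun x => Nat.find_spec (hex x)⟩
  exact Measurable.find (p := fun n x => ∀ i, k (e n) x ≤ k i x) (fun n => measurable_const)
    (fun n => by simpa only [Set.ofPred_forall] using
      MeasurableSet.iInter fun i => measurableSet_le (hk (e n)) (hk i)) hex

section FiniteRange

variable {X Y : Type*} {Ω : Set X} {T : X → Y} {s : Finset Y}

theorem eqOn_comp_sum_indicator (hTs : Set.MapsTo T Ω s) (g : Y → ℝ) :
    Set.EqOn (fun x => g (T x)) (fun x => ∑ y ∈ s, (T ⁻¹' {y}).indicator (fun _ => g y) x) Ω := by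
  classical
  intro x hx
  simp [Set.indicator_apply, Finset.sum_ite_eq, Finset.mem_coe.1 (hTs hx)]

variable [MeasurableSpace X] [MeasurableSpace Y] [MeasurableSingletonClass Y] {μ : Measure X}

theorem integrableOn_comp_of_mapsTo_finset (hΩ : MeasurableSet Ω) (hΩfin : μ Ω ≠ ∞)
    (hT : Measurable T) (hTs : Set.MapsTo T Ω s) (g : Y → ℝ) :
    IntegrableOn (fun x => g (T x)) Ω μ :=
  IntegrableOn.congr_fun (integrable_finsetSum s fun y _ =>
    (integrableOn_const hΩfin (C := g y)).indicator (hT (measurableSet_singleton y)))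
      (eqOn_comp_sum_indicator hTs g).symm hΩ

theorem setIntegral_comp_of_mapsTo_finset (hΩ : MeasurableSet Ω) (hΩfin : μ Ω ≠ ∞)
    (hT : Measurable T) (hTs : Set.MapsTo T Ω s) (g : Y → ℝ) :
    ∫ x in Ω, g (T x) ∂μ = ∑ y ∈ s, μ.real (Ω ∩ T ⁻¹' {y}) * g y := by
  rw [setIntegral_congr_fun hΩ (eqOn_comp_sum_indicator hTs g), integral_finsetSum]
  · refine Finset.sum_congr rfl fun y _ => ?_
    rw [setIntegral_indicator (hT (measurableSet_singleton y)), setIntegral_const, smul_eq_mul]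
  · exact fun y _ =>
      (integrableOn_const hΩfin (C := g y)).indicator (hT (measurableSet_singleton y))

end FiniteRange

theorem LipschitzOnWith.isBounded_image {α β : Type*} [PseudoMetricSpace α]
    [PseudoMetricSpace β] {K : ℝ≥0} {f : α → β} {s : Set α} (hf : LipschitzOnWith K f s)
    (hs : IsBounded s) : IsBounded (f '' s) :=
  isBounded_image_iff.2 ⟨K * diam s, fun x hx y hy =>
    (hf.dist_le_mul x hx y hy).trans (by gcongr; exact dist_le_diam_of_mem hs hx hy)⟩

theorem LipschitzOnWith.integrableOn {X : Type*} [PseudoMetricSpace X] [MeasurableSpace X]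
    [OpensMeasurableSpace X] {μ : Measure X} {K : ℝ≥0} {f : X → ℝ} {s : Set X}
    (hf : LipschitzOnWith K f s) (hs : MeasurableSet s) (hbdd : IsBounded s) (hfin : μ s ≠ ∞) :
    IntegrableOn f s μ := by
  obtain ⟨C, hC⟩ := isBounded_iff_forall_norm_le.1 (hf.isBounded_image hbdd)
  exact IntegrableOn.of_bound hfin.lt_top (hf.continuousOn.aestronglyMeasurable hs) C
    (ae_restrict_of_forall_mem hs fun x hx => hC _ ⟨x, hx, rfl⟩)

section SemiDiscrete

variable {X ι : Type*}

def cTransform (c : ι → X → ℝ) (ψ : ι → ℝ) (x : X) : ℝ :=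
  ⨅ i, (c i x - ψ i)

def dualObjective [MeasurableSpace X] [Fintype ι] (μ : Measure X) (Ω : Set X)
    (c : ι → X → ℝ) (w ψ : ι → ℝ) : ℝ :=
  ∑ i, w i * ψ i + ∫ x in Ω, cTransform c ψ x ∂μ

variable {c : ι → X → ℝ} {ψ : ι → ℝ}

theorem cTransform_le [Finite ι] (x : X) (i : ι) : cTransform c ψ x ≤ c i x - ψ i :=
  ciInf_le (Finite.bddBelow_range _) i

theorem cTransform_eq_of_forall_le [Finite ι] [Nonempty ι] {x : X} {i : ι}
    (h : ∀ j, c i x - ψ i ≤ c j x - ψ j) : cTransform c ψ x = c i x - ψ i :=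
  le_antisymm (cTransform_le x i) (le_ciInf h)

theorem cTransform_add_const [Finite ι] [Nonempty ι] (x : X) (a : ℝ) :
    cTransform c (fun i => ψ i + a) x = cTransform c ψ x - a := by
  simp only [cTransform, ← sub_sub]
  exact ciInf_sub_const _ a

theorem abs_cTransform_sub_cTransform_le [Fintype ι] [Nonempty ι] (x : X) (ψ ψ' : ι → ℝ) :
    |cTransform c ψ x - cTransform c ψ' x| ≤ dist ψ ψ' :=
  abs_ciInf_sub_ciInf_le fun i => by
    rw [sub_sub_sub_cancel_left, ← Real.dist_eq]
    exact dist_le_pi_dist ψ' ψ i |>.trans_eq (dist_comm _ _)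

theorem abs_cTransform_le [Fintype ι] [Nonempty ι] {x : X} {B : ℝ} (hB : ∀ i, |c i x| ≤ B)
    (ψ : ι → ℝ) : |cTransform c ψ x| ≤ B + ‖ψ‖ := by
  simpa [cTransform, ciInf_const] using abs_ciInf_sub_ciInf_le (g := fun _ => (0 : ℝ))
    fun i => by
      rw [sub_zero]
      exact (abs_sub _ _).trans (add_le_add (hB i) (norm_le_pi_norm ψ i))

theorem hasDerivAt_cTransform_add_smul [Finite ι] [Nonempty ι] {x : X}
    (hx : ∀ i j, i ≠ j → c i x - ψ i ≠ c j x - ψ j) {i₀ : ι}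
    (hi₀ : ∀ j, c i₀ x - ψ i₀ ≤ c j x - ψ j) (e : ι → ℝ) :
    HasDerivAt (fun t : ℝ => cTransform c (ψ + t • e) x) (-e i₀) 0 := by
  have hmin : ∀ j ≠ i₀, c i₀ x - (ψ i₀ + 0 * e i₀) < c j x - (ψ j + 0 * e j) := fun j hj => by
    simpa using (hi₀ j).lt_of_ne (hx i₀ j hj.symm)
  have hev := eventually_ciInf_eq_of_lt (g := fun j (t : ℝ) => c j x - (ψ j + t * e j))
    (fun j => by fun_prop) hmin
  have hder : HasDerivAt (fun t : ℝ => c i₀ x - (ψ i₀ + t * e i₀)) (-e i₀) 0 := by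
    simpa using (((hasDerivAt_id' (0 : ℝ)).mul_const (e i₀)).const_add (ψ i₀)).const_sub (c i₀ x)
  exact hder.congr_of_eventuallyEq hev

variable [MeasurableSpace X] {μ : Measure X} {Ω : Set X} {w : ι → ℝ}

theorem measurable_cTransform [Finite ι] (hc : ∀ i, Measurable (c i)) (ψ : ι → ℝ) :
    Measurable (cTransform c ψ) :=
  Measurable.iInf fun i => (hc i).sub_const _

theorem integrableOn_cTransform [Fintype ι] [Nonempty ι] {B : ℝ} (hΩ : MeasurableSet Ω)
    (hΩfin : μ Ω ≠ ∞) (hc : ∀ i, Measurable (c i)) (hB : ∀ i, ∀ x ∈ Ω, |c i x| ≤ B)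
    (ψ : ι → ℝ) : IntegrableOn (cTransform c ψ) Ω μ :=
  IntegrableOn.of_bound hΩfin.lt_top (measurable_cTransform hc ψ).aestronglyMeasurable _
    (ae_restrict_of_forall_mem hΩ fun x hx => abs_cTransform_le (fun i => hB i x hx) ψ)

theorem ae_forall_sub_ne [Countable ι] (hties : ∀ i j, i ≠ j → ∀ a, μ {x | c i x - c j x = a} = 0)
    (ψ : ι → ℝ) : ∀ᵐ x ∂μ, ∀ i j, i ≠ j → c i x - ψ i ≠ c j x - ψ j := by
  refine ae_all_iff.2 fun i => ae_all_iff.2 fun j => ?_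
  rcases eq_or_ne i j with rfl | hij
  · exact ae_of_all _ fun _ h => (h rfl).elim
  · filter_upwards [measure_eq_zero_iff_ae_notMem.1 (hties i j hij (ψ i - ψ j))] with x hx _ h
    exact hx (by linarith)

theorem dualObjective_add_const [Fintype ι] [Nonempty ι] (hΩfin : μ Ω ≠ ∞)
    (hint : ∀ ψ, IntegrableOn (cTransform c ψ) Ω μ) (htot : ∑ i, w i = μ.real Ω)
    (ψ : ι → ℝ) (a : ℝ) :
    dualObjective μ Ω c w (fun i => ψ i + a) = dualObjective μ Ω c w ψ := by
  simp only [dualObjective, cTransform_add_const, mul_add, Finset.sum_add_distrib,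
    ← Finset.sum_mul, htot]
  rw [integral_sub (hint ψ) (integrableOn_const hΩfin), setIntegral_const, smul_eq_mul]
  ring

theorem continuous_dualObjective [Fintype ι] [Nonempty ι] (hΩfin : μ Ω ≠ ∞)
    (hint : ∀ ψ, IntegrableOn (cTransform c ψ) Ω μ) : Continuous (dualObjective μ Ω c w) := by
  have hlip : LipschitzWith (μ.real Ω).toNNReal fun ψ => ∫ x in Ω, cTransform c ψ x ∂μ := by
    refine LipschitzWith.of_dist_le_mul fun ψ ψ' => ?_
    rw [Real.dist_eq, ← integral_sub (hint ψ) (hint ψ'), Real.coe_toNNReal _ measureReal_nonneg,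
      mul_comm, ← Real.norm_eq_abs]
    exact norm_setIntegral_le_of_norm_le_const hΩfin.lt_top fun x _ =>
      abs_cTransform_sub_cTransform_le x ψ ψ'
  exact (continuous_finsetSum _ fun i _ => continuous_const.mul (continuous_apply i)).add
    hlip.continuous

theorem dualObjective_le [Fintype ι] {B : ℝ} (hΩ : MeasurableSet Ω) (hΩfin : μ Ω ≠ ∞)
    (hint : ∀ ψ, IntegrableOn (cTransform c ψ) Ω μ) (hB : ∀ i, ∀ x ∈ Ω, |c i x| ≤ B)
    (hw : ∀ i, 0 ≤ w i) (htot : ∑ i, w i = μ.real Ω) {j : ι} (hj : ∀ k, ψ k ≤ ψ j) (i : ι) :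
    dualObjective μ Ω c w ψ ≤ B * μ.real Ω - w i * (ψ j - ψ i) := by
  have hle : ∫ x in Ω, cTransform c ψ x ∂μ ≤ (B - ψ j) * μ.real Ω := by
    rw [mul_comm, ← smul_eq_mul, ← setIntegral_const]
    refine setIntegral_mono_on (hint ψ) (integrableOn_const hΩfin) hΩ fun x hx => ?_
    linarith [cTransform_le (c := c) (ψ := ψ) x j, (abs_le.1 (hB j x hx)).2]
  have hsum : ∑ k, w k * (ψ k - ψ j) ≤ w i * (ψ i - ψ j) := by
    have := Finset.single_le_sum (f := fun k => -(w k * (ψ k - ψ j)))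
      (fun k _ => neg_nonneg.2 (mul_nonpos_of_nonneg_of_nonpos (hw k) (sub_nonpos.2 (hj k))))
      (Finset.mem_univ i)
    simpa [Finset.sum_neg_distrib] using this
  simp only [mul_sub, Finset.sum_sub_distrib, ← Finset.sum_mul, htot] at hsum
  unfold dualObjective
  linarith

theorem neg_le_dualObjective_zero [Fintype ι] [Nonempty ι] {B : ℝ} (hΩ : MeasurableSet Ω)
    (hΩfin : μ Ω ≠ ∞) (hint : ∀ ψ, IntegrableOn (cTransform c ψ) Ω μ)
    (hB : ∀ i, ∀ x ∈ Ω, |c i x| ≤ B) : -(B * μ.real Ω) ≤ dualObjective μ Ω c w 0 := by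
  have : ∫ x in Ω, -B ∂μ ≤ ∫ x in Ω, cTransform c 0 x ∂μ :=
    setIntegral_mono_on (integrableOn_const hΩfin) (hint 0) hΩ
      fun x hx => le_ciInf fun i => by simpa using neg_le_of_abs_le (hB i x hx)
  simpa [dualObjective, mul_comm] using this

/-- Since the dual functional is invariant under adding constants, it suffices to maximise it
over a compact cube, outside of which it is below its value at `0`. -/
theorem exists_forall_dualObjective_le [Fintype ι] [Nonempty ι] {B : ℝ} (hΩ : MeasurableSet Ω)
    (hΩfin : μ Ω ≠ ∞) (hint : ∀ ψ, IntegrableOn (cTransform c ψ) Ω μ)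
    (hB : ∀ i, ∀ x ∈ Ω, |c i x| ≤ B) (hw : ∀ i, 0 < w i) (htot : ∑ i, w i = μ.real Ω) :
    ∃ ψ, ∀ φ, dualObjective μ Ω c w φ ≤ dualObjective μ Ω c w ψ := by
  have hB' : ∀ i, ∀ x ∈ Ω, |c i x| ≤ |B| := fun i x hx => (hB i x hx).trans (le_abs_self B)
  obtain ⟨i₀, hi₀⟩ := Finite.exists_min w
  set M := 2 * |B| * μ.real Ω / w i₀
  have hM : 0 ≤ M := by have := hw i₀; positivity
  obtain ⟨ψ, -, hψ⟩ := (isCompact_Icc (a := (0 : ι → ℝ)) (b := fun _ => M)).exists_isMaxOn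
    ⟨0, le_rfl, fun _ => hM⟩ (continuous_dualObjective hΩfin hint).continuousOn
  refine ⟨ψ, fun φ => ?_⟩
  obtain ⟨k, hk⟩ := Finite.exists_min φ
  obtain ⟨j, hj⟩ := Finite.exists_max φ
  rw [← dualObjective_add_const hΩfin hint htot φ (-φ k)]
  by_cases hφ : ∀ i, φ i + -φ k ≤ M
  · exact hψ ⟨fun i => by simpa using hk i, hφ⟩
  obtain ⟨i, hi⟩ := not_forall.1 hφ
  have hjk : M * w i₀ < (φ j - φ k) * w k := by
    have := hw i₀
    nlinarith [hj i, hi₀ k]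
  rw [div_mul_cancel₀ _ (hw i₀).ne'] at hjk
  calc dualObjective μ Ω c w (fun i => φ i + -φ k)
      ≤ |B| * μ.real Ω - w k * ((φ j + -φ k) - (φ k + -φ k)) :=
        dualObjective_le hΩ hΩfin hint hB' (fun i => (hw i).le) htot
          (fun i => by simpa using hj i) k
    _ ≤ -(|B| * μ.real Ω) := by linarith
    _ ≤ dualObjective μ Ω c w 0 := neg_le_dualObjective_zero hΩ hΩfin hint hB'
    _ ≤ dualObjective μ Ω c w ψ := hψ ⟨le_rfl, fun _ => hM⟩

variable [MeasurableSpace ι] [MeasurableSingletonClass ι] {τ : X → ι}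

theorem hasDerivAt_integral_cTransform_add_smul [Fintype ι] [Nonempty ι] (hΩ : MeasurableSet Ω)
    (hΩfin : μ Ω ≠ ∞) (hint : ∀ ψ, IntegrableOn (cTransform c ψ) Ω μ)
    (hties : ∀ i j, i ≠ j → ∀ a, μ {x | c i x - c j x = a} = 0) (hτ : Measurable τ)
    (hτmin : ∀ x j, c (τ x) x - ψ (τ x) ≤ c j x - ψ j) (e : ι → ℝ) :
    HasDerivAt (fun t : ℝ => ∫ x in Ω, cTransform c (ψ + t • e) x ∂μ)
      (-∑ i, μ.real (Ω ∩ τ ⁻¹' {i}) * e i) 0 := by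
  have hτΩ : Set.MapsTo τ Ω (Finset.univ : Finset ι) := fun x _ => Finset.mem_coe.2 (Finset.mem_univ _)
  rw [← setIntegral_comp_of_mapsTo_finset hΩ hΩfin hτ hτΩ e, ← integral_neg]
  refine (hasDerivAt_integral_of_dominated_loc_of_lip (bound := fun _ => ‖e‖) Filter.univ_mem
    (Eventually.of_forall fun t => (hint _).aestronglyMeasurable) (hint _)
    (integrableOn_comp_of_mapsTo_finset hΩ hΩfin hτ hτΩ e).neg.aestronglyMeasurable ?_
    (integrableOn_const hΩfin) ?_).2
  · refine ae_of_all _ fun x => (LipschitzWith.of_dist_le_mul fun t t' => ?_).lipschitzOnWith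
    rw [Real.dist_eq, Real.coe_nnabs, abs_norm]
    calc |cTransform c (ψ + t • e) x - cTransform c (ψ + t' • e) x|
        ≤ dist (ψ + t • e) (ψ + t' • e) := abs_cTransform_sub_cTransform_le x _ _
      _ = ‖e‖ * dist t t' := by
        rw [dist_add_left, dist_eq_norm, ← sub_smul, norm_smul, Real.dist_eq, Real.norm_eq_abs,
          mul_comm]
  · filter_upwards [ae_restrict_of_ae (ae_forall_sub_ne hties ψ)] with x hx
    exact hasDerivAt_cTransform_add_smul hx (hτmin x) e

/-- The derivative of the dual functional in the direction `Pi.single i 1` is `w i` minus the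
mass that `τ` sends to `i`; it vanishes at a maximiser. -/
theorem measureReal_inter_preimage_eq_of_forall_dualObjective_le [Fintype ι] [Nonempty ι]
    (hΩ : MeasurableSet Ω) (hΩfin : μ Ω ≠ ∞) (hint : ∀ ψ, IntegrableOn (cTransform c ψ) Ω μ)
    (hties : ∀ i j, i ≠ j → ∀ a, μ {x | c i x - c j x = a} = 0)
    (hmax : ∀ φ, dualObjective μ Ω c w φ ≤ dualObjective μ Ω c w ψ) (hτ : Measurable τ)
    (hτmin : ∀ x j, c (τ x) x - ψ (τ x) ≤ c j x - ψ j) (i : ι) :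
    μ.real (Ω ∩ τ ⁻¹' {i}) = w i := by
  classical
  set e : ι → ℝ := Pi.single i 1
  have hsum : HasDerivAt (fun t : ℝ => ∑ k, w k * (ψ + t • e) k) (∑ k, w k * e k) 0 :=
    HasDerivAt.fun_sum fun k _ => by
      simpa using (((hasDerivAt_id' (0 : ℝ)).mul_const (e k)).const_add (ψ k)).const_mul (w k)
  have hderiv := hsum.add (hasDerivAt_integral_cTransform_add_smul hΩ hΩfin hint hties hτ hτmin e)
  have hmax0 : IsLocalMax (fun t : ℝ => dualObjective μ Ω c w (ψ + t • e)) 0 :=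
    Eventually.of_forall fun t => by simpa using hmax (ψ + t • e)
  have := hmax0.hasDerivAt_eq_zero hderiv
  simp [e, Pi.single_apply] at this
  linarith

theorem exists_argmin_measureReal_inter_preimage_eq [Fintype ι] [Nonempty ι] {B : ℝ}
    (hΩ : MeasurableSet Ω) (hΩfin : μ Ω ≠ ∞) (hc : ∀ i, Measurable (c i))
    (hB : ∀ i, ∀ x ∈ Ω, |c i x| ≤ B) (hties : ∀ i j, i ≠ j → ∀ a, μ {x | c i x - c j x = a} = 0)
    (hw : ∀ i, 0 < w i) (htot : ∑ i, w i = μ.real Ω) :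
    ∃ (ψ : ι → ℝ) (τ : X → ι), Measurable τ ∧ (∀ x j, c (τ x) x - ψ (τ x) ≤ c j x - ψ j) ∧
      ∀ i, μ.real (Ω ∩ τ ⁻¹' {i}) = w i := by
  have hint := integrableOn_cTransform hΩ hΩfin hc hB
  obtain ⟨ψ, hψ⟩ := exists_forall_dualObjective_le hΩ hΩfin hint hB hw htot
  obtain ⟨τ, hτ, hτmin⟩ := exists_measurable_argmin fun i => (hc i).sub_const (ψ i)
  exact ⟨ψ, τ, hτ, hτmin,
    measureReal_inter_preimage_eq_of_forall_dualObjective_le hΩ hΩfin hint hties hψ hτ hτmin⟩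

theorem setIntegral_cost_argmin_eq_dualObjective [Fintype ι] [Nonempty ι] (hΩ : MeasurableSet Ω)
    (hΩfin : μ Ω ≠ ∞) (hint : ∀ ψ, IntegrableOn (cTransform c ψ) Ω μ) (hτ : Measurable τ)
    (hτmin : ∀ x j, c (τ x) x - ψ (τ x) ≤ c j x - ψ j)
    (hτw : ∀ i, μ.real (Ω ∩ τ ⁻¹' {i}) = w i) :
    ∫ x in Ω, c (τ x) x ∂μ = dualObjective μ Ω c w ψ := by
  have hτΩ : Set.MapsTo τ Ω (Finset.univ : Finset ι) := fun x _ => Finset.mem_coe.2 (Finset.mem_univ _)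
  have hsplit : ∀ x, c (τ x) x = cTransform c ψ x + ψ (τ x) := fun x => by
    rw [cTransform_eq_of_forall_le (hτmin x)]
    ring
  simp only [hsplit]
  rw [integral_add (hint ψ) (integrableOn_comp_of_mapsTo_finset hΩ hΩfin hτ hτΩ ψ),
    setIntegral_comp_of_mapsTo_finset hΩ hΩfin hτ hτΩ ψ, dualObjective, add_comm]
  simp only [hτw]

end SemiDiscrete

theorem hasDerivAt_sqrt_sq_add_sq_sub {r : ℝ} (hr : r ≠ 0) (a t : ℝ) :
    HasDerivAt (fun t : ℝ => √(r ^ 2 + (t - a) ^ 2)) ((t - a) / √(r ^ 2 + (t - a) ^ 2)) t := by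
  have hpos : 0 < r ^ 2 + (t - a) ^ 2 := by positivity
  convert ((((hasDerivAt_id' t).sub_const a).fun_pow 2).const_add (r ^ 2)).sqrt hpos.ne' using 1
  field_simp
  ring

theorem strictMono_div_sqrt_sq_add_sq {r : ℝ} (hr : r ≠ 0) :
    StrictMono fun u : ℝ => u / √(r ^ 2 + u ^ 2) := by
  refine strictMono_of_deriv_pos fun u => ?_
  have hs := hasDerivAt_sqrt_sq_add_sq_sub hr 0 u
  simp only [sub_zero] at hs
  have hpos : 0 < √(r ^ 2 + u ^ 2) := by positivity
  rw [((hasDerivAt_id' u).fun_div hs hpos.ne').deriv]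
  have hsq : √(r ^ 2 + u ^ 2) ^ 2 = r ^ 2 + u ^ 2 := Real.sq_sqrt (by positivity)
  field_simp
  nlinarith [sq_pos_of_ne_zero hr]

theorem strictMono_sqrt_sq_add_sq_sub {r d : ℝ} (hr : r ≠ 0) (hd : 0 < d) :
    StrictMono fun t : ℝ => √(r ^ 2 + t ^ 2) - √(r ^ 2 + (t - d) ^ 2) := by
  refine strictMono_of_deriv_pos fun t => ?_
  have h := (hasDerivAt_sqrt_sq_add_sq_sub hr 0 t).fun_sub (hasDerivAt_sqrt_sq_add_sq_sub hr d t)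
  simp only [sub_zero] at h
  rw [h.deriv, sub_pos]
  exact strictMono_div_sqrt_sq_add_sq hr (by linarith)

theorem MeasureTheory.Measure.prod_eq_zero_of_ae_subsingleton_slices {α β : Type*} [MeasurableSpace α]
    [MeasurableSpace β] {μ : Measure α} {ν : Measure β} [SFinite ν] [NullSingletonClass ν]
    {s : Set (α × β)} (hs : MeasurableSet s) (h : ∀ᵐ a ∂μ, (Prod.mk a ⁻¹' s).Subsingleton) :
    μ.prod ν s = 0 :=
  (Measure.measure_prod_null hs).2 <| h.mono fun _ ha => ha.measure_zero ν

theorem volume_setOf_norm_sub_norm_sub_single_eq {d : ℝ} (hd : 0 < d) (a : ℝ) :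
    volume {y : Plane | ‖y‖ - ‖y - EuclideanSpace.single 1 d‖ = a} = 0 := by
  let e : Plane ≃ᵐ ℝ × ℝ :=
    (MeasurableEquiv.toLp 2 (Fin 2 → ℝ)).symm.trans MeasurableEquiv.finTwoArrow
  have he : MeasurePreserving e :=
    (volume_preserving_finTwoArrow ℝ).comp (PiLp.volume_preserving_ofLp (Fin 2))
  let S : Set (ℝ × ℝ) := {p | √(p.1 ^ 2 + p.2 ^ 2) - √(p.1 ^ 2 + (p.2 - d) ^ 2) = a}
  have hS : MeasurableSet S := measurableSet_eq_fun (by fun_prop) measurable_const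
  have hpre : {y : Plane | ‖y‖ - ‖y - EuclideanSpace.single 1 d‖ = a} = e ⁻¹' S := by
    ext y
    simp [S, e, EuclideanSpace.norm_eq, Fin.sum_univ_two]
  rw [hpre, he.measure_preimage hS.nullMeasurableSet, Measure.volume_eq_prod]
  -- Fubini: each line `{s} × ℝ` with `s ≠ 0` meets `S` at most once.
  refine Measure.prod_eq_zero_of_ae_subsingleton_slices hS ?_
  filter_upwards [compl_mem_ae_iff.2 (measure_singleton (0 : ℝ))] with s hs t₁ ht₁ t₂ ht₂
  exact (strictMono_sqrt_sq_add_sq_sub hs hd).injective (ht₁.trans ht₂.symm)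

theorem volume_setOf_norm_sub_sub_norm_sub_eq {z z' : Plane} (h : z ≠ z') (a : ℝ) :
    volume {x : Plane | ‖x - z‖ - ‖x - z'‖ = a} = 0 := by
  -- Reduce to `z = 0`, `z' = (0, ‖z' - z‖)` by a translation and a reflection.
  have hd : 0 < ‖z' - z‖ := norm_pos_iff.2 (sub_ne_zero.2 h.symm)
  set e : Plane := EuclideanSpace.single 1 ‖z' - z‖
  set R := (ℝ ∙ (z' - z - e))ᗮ.reflection
  have hR : R (z' - z) = e := Submodule.reflection_sub (by simp [e])
  have hmp : MeasurePreserving (fun x => R (x - z)) :=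
    R.measurePreserving.comp (measurePreserving_sub_right volume z)
  have hpre : {x : Plane | ‖x - z‖ - ‖x - z'‖ = a} =
      (fun x => R (x - z)) ⁻¹' {y | ‖y‖ - ‖y - e‖ = a} := by
    ext x
    change ‖x - z‖ - ‖x - z'‖ = a ↔ ‖R (x - z)‖ - ‖R (x - z) - e‖ = a
    rw [← hR, ← map_sub, R.norm_map, R.norm_map, sub_sub_sub_cancel_right]
  rw [hpre, hmp.measure_preimage
    (measurableSet_eq_fun (by fun_prop) measurable_const).nullMeasurableSet]
  exact volume_setOf_norm_sub_norm_sub_single_eq hd a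

theorem lipschitzWith_cTransform_norm_sub {E ι : Type*} [SeminormedAddCommGroup E] [Finite ι]
    [Nonempty ι] (z : ι → E) (ψ : ι → ℝ) :
    LipschitzWith 1 (cTransform (fun i x => ‖x - z i‖) ψ) :=
  LipschitzWith.of_dist_le_mul fun x y => by
    rw [Real.dist_eq, NNReal.coe_one, one_mul, dist_eq_norm]
    refine abs_ciInf_sub_ciInf_le fun i => ?_
    rw [sub_sub_sub_cancel_right, ← sub_sub_sub_cancel_right x y (z i)]
    exact abs_norm_sub_norm_le _ _

theorem sum_mul_le_integral_norm_sub {Ω : Set Plane} (hΩ : MeasurableSet Ω) (hbdd : IsBounded Ω)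
    {Z : Finset Plane} {v : Plane → ℝ} (hZ : (↑Z : Set Plane) ⊆ Ω) {φ : Plane → ℝ}
    (hφ : LipschitzOnWith 1 φ Ω) (hφ0 : ∫ x in Ω, φ x = 0) {T : Plane → Plane}
    (hT : IsTransportMap Ω Z v T) :
    ∑ z ∈ Z, v z * φ z ≤ ∫ x in Ω, ‖x - T x‖ := by
  obtain ⟨hTm, hTZ, hTv⟩ := hT
  have hfin : volume Ω ≠ ∞ := hbdd.measure_lt_top.ne
  have hTs : Set.MapsTo T Ω Z := fun x hx => hTZ x hx
  have hφint := hφ.integrableOn hΩ hbdd hfin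
  have hcost : IntegrableOn (fun x => ‖x - T x‖) Ω :=
    IntegrableOn.of_bound hfin.lt_top (by fun_prop) (diam Ω) <| ae_restrict_of_forall_mem hΩ
      fun x hx => by simpa [dist_eq_norm] using dist_le_diam_of_mem hbdd hx (hZ (hTZ x hx))
  have hsum : ∑ z ∈ Z, v z * φ z = ∫ x in Ω, φ (T x) := by
    rw [setIntegral_comp_of_mapsTo_finset hΩ hfin hTm hTs]
    exact Finset.sum_congr rfl fun z hz => by rw [← hTv z hz]; rfl
  calc ∑ z ∈ Z, v z * φ z = ∫ x in Ω, (φ (T x) - φ x) := by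
        rw [integral_sub (integrableOn_comp_of_mapsTo_finset hΩ hfin hTm hTs φ) hφint, hφ0,
          sub_zero, hsum]
    _ ≤ ∫ x in Ω, ‖x - T x‖ :=
        setIntegral_mono_on ((integrableOn_comp_of_mapsTo_finset hΩ hfin hTm hTs φ).sub hφint)
          hcost hΩ fun x hx => by
            have := hφ.dist_le_mul (T x) (hZ (hTZ x hx)) x hx
            rw [Real.dist_eq, NNReal.coe_one, one_mul, dist_eq_norm, norm_sub_rev] at this
            exact (le_abs_self _).trans this

theorem isTransportMap_coe_comp {Ω : Set Plane} {Z : Finset Plane} {v : Plane → ℝ} {τ : Plane → Z}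
    (hτ : Measurable τ) (hτv : ∀ i : Z, volume.real (Ω ∩ τ ⁻¹' {i}) = v i) :
    IsTransportMap Ω Z v fun x => τ x := by
  refine ⟨measurable_subtype_coe.comp hτ, fun x _ => (τ x).2, fun z hz => ?_⟩
  have hfiber : {x | x ∈ Ω ∧ (τ x : Plane) = z} = Ω ∩ τ ⁻¹' {⟨z, hz⟩} := by
    ext x
    simp [Subtype.ext_iff]
  rw [hfiber, ← measureReal_def]
  exact hτv ⟨z, hz⟩

theorem sum_mul_sub_setAverage {X : Type*} [MeasurableSpace X] {μ : Measure X} {Ω : Set X}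
    (hΩfin : μ Ω ≠ ∞) {f : X → ℝ} (hf : IntegrableOn f Ω μ) {Z : Finset X} {v : X → ℝ}
    (htot : ∑ z ∈ Z, v z = μ.real Ω) :
    ∑ z ∈ Z, v z * (f z - ⨍ x in Ω, f x ∂μ) = ∑ z ∈ Z, v z * f z - ∫ x in Ω, f x ∂μ := by
  have := setAverage_sub_setAverage hΩfin f
  rw [integral_sub hf (integrableOn_const hΩfin), setIntegral_const, smul_eq_mul,
    sub_eq_zero] at this
  simp only [mul_sub, Finset.sum_sub_distrib, ← Finset.sum_mul, htot, this]

theorem exists_isTransportMap_integral_norm_sub_le {Ω : Set Plane} (hΩo : IsOpen Ω)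
    (hbdd : IsBounded Ω) {Z : Finset Plane} {v : Plane → ℝ} (hZ : (↑Z : Set Plane) ⊆ Ω)
    (hv : ∀ z ∈ Z, 0 < v z) (htot : ∑ z ∈ Z, v z = (volume Ω).toReal) :
    ∃ T, IsTransportMap Ω Z v T ∧ ∃ φ : Plane → ℝ, LipschitzOnWith 1 φ Ω ∧
      ∫ x in Ω, φ x = 0 ∧ ∫ x in Ω, ‖x - T x‖ ≤ ∑ z ∈ Z, v z * φ z := by
  have hΩ := hΩo.measurableSet
  have hfin : volume Ω ≠ ∞ := hbdd.measure_lt_top.ne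
  rcases Z.eq_empty_or_nonempty with rfl | hZne
  · have hΩe : Ω = ∅ := (hΩo.measure_eq_zero_iff volume).1 <| by
      simpa [ENNReal.toReal_eq_zero_iff, hfin] using htot.symm
    subst hΩe
    exact ⟨id, ⟨measurable_id, fun _ h => h.elim, fun _ h => (Finset.notMem_empty _ h).elim⟩,
      0, lipschitzOnWith_empty 1 0, by simp, by simp⟩
  have : Nonempty Z := hZne.to_subtype
  set c : Z → Plane → ℝ := fun i x => ‖x - i‖
  have hc : ∀ i, Measurable (c i) := fun i => by fun_prop
  have hB : ∀ i, ∀ x ∈ Ω, |c i x| ≤ diam Ω := fun i x hx => by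
    simpa [c, dist_eq_norm] using dist_le_diam_of_mem hbdd hx (hZ i.2)
  have hties : ∀ i j : Z, i ≠ j → ∀ a, volume {x | c i x - c j x = a} = 0 := fun i j hij =>
    volume_setOf_norm_sub_sub_norm_sub_eq (Subtype.coe_injective.ne hij)
  obtain ⟨ψ, τ, hτ, hτmin, hτv⟩ := exists_argmin_measureReal_inter_preimage_eq hΩ hfin hc hB
    hties (fun i => hv i i.2) (by rw [Finset.sum_coe_sort Z v, htot]; rfl)
  set φ₀ : Plane → ℝ := fun x => -cTransform c ψ x
  have hφ₀ : LipschitzWith 1 φ₀ := (lipschitzWith_cTransform_norm_sub _ ψ).neg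
  set a := ⨍ x in Ω, φ₀ x
  refine ⟨fun x => τ x, isTransportMap_coe_comp hτ hτv, fun x => φ₀ x - a,
    by simpa using (hφ₀.sub (LipschitzWith.const a)).lipschitzOnWith,
    setAverage_sub_setAverage hfin φ₀, ?_⟩
  calc ∫ x in Ω, ‖x - τ x‖ = dualObjective volume Ω c (fun i => v i) ψ :=
        setIntegral_cost_argmin_eq_dualObjective hΩ hfin (integrableOn_cTransform hΩ hfin hc hB)
          hτ hτmin hτv
    _ ≤ ∑ i : Z, v i * φ₀ i - ∫ x in Ω, φ₀ x := by
        rw [dualObjective, integral_neg, sub_neg_eq_add]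
        gcongr with i
        · exact (hv i i.2).le
        · have := cTransform_le (c := c) (ψ := ψ) (i : Plane) i
          simp only [c, sub_self, norm_zero, zero_sub] at this
          exact le_neg_of_le_neg this
    _ = ∑ z ∈ Z, v z * (φ₀ z - a) := by
        rw [Finset.sum_coe_sort Z fun z => v z * φ₀ z,
          sum_mul_sub_setAverage hfin (hφ₀.lipschitzOnWith.integrableOn hΩ hbdd hfin) htot]

theorem csInf_eq_csSup_of_forall_le_of_le {α : Type*} [ConditionallyCompleteLattice α]
    {A B : Set α} {a b : α} (ha : a ∈ A) (hb : b ∈ B) (hab : a ≤ b)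
    (h : ∀ b ∈ B, ∀ a ∈ A, b ≤ a) : sInf A = sSup B :=
  le_antisymm
    ((csInf_le ⟨b, fun _ ha' => h b hb _ ha'⟩ ha).trans
      (hab.trans (le_csSup ⟨a, fun _ hb' => h _ hb' a ha⟩ hb)))
    (csSup_le ⟨b, hb⟩ fun _ hb' => le_csInf ⟨a, ha⟩ fun _ ha' => h _ hb' _ ha')

/-- **Kantorovich–Rubinstein duality (the `p = ∞` case of Proposition 1).** For a bounded open
`Ω ⊆ ℝ²` and an atomic measure `μ` with finite support in `Ω`, positive weights and total mass
`|Ω|`, the minimal linear transport cost between the Lebesgue measure on `Ω` and `μ` equals the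
supremum of `∫_Ω φ dμ` over 1-Lipschitz functions `φ` on `Ω` with `∫_Ω φ dx = 0`. -/
theorem kantorovich_rubinstein_duality
    (Omega : Set Plane) (hopen : IsOpen Omega) (hbdd : Bornology.IsBounded Omega)
    (Z : Finset Plane) (v : Plane → ℝ)
    (hZ : (↑Z : Set Plane) ⊆ Omega) (hv : ∀ z ∈ Z, 0 < v z)
    (htot : ∑ z ∈ Z, v z = (volume Omega).toReal) :
    sInf {c : ℝ | ∃ T : Plane → Plane, IsTransportMap Omega Z v T ∧
        c = ∫ x in Omega, ‖x - T x‖} =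
      sSup {s : ℝ | ∃ phi : Plane → ℝ, LipschitzOnWith 1 phi Omega ∧
        (∫ x in Omega, phi x) = 0 ∧ s = ∑ z ∈ Z, v z * phi z} := by
  obtain ⟨T, hT, φ, hφ, hφ0, hle⟩ :=
    exists_isTransportMap_integral_norm_sub_le hopen hbdd hZ hv htot
  refine csInf_eq_csSup_of_forall_le_of_le ⟨T, hT, rfl⟩ ⟨φ, hφ, hφ0, rfl⟩ hle ?_
  rintro _ ⟨φ', hφ', hφ0', rfl⟩ _ ⟨T', hT', rfl⟩
  exact sum_mul_le_integral_norm_sub hopen.measurableSet hbdd hZ hφ' hφ0' hT'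
end
end

section
/- There exist constants ξ > 0 and ζ > 0 such that for every integer n ≥ 3 and every real v ≥ 1.5·10⁻⁴, the function f(v,n) = 2·c₆·v^{1/2} + c_n·v² satisfies f(v,n) − 3·c₆·v + κ·(6 − n) ≥ ξ·(v − 1)² + ζ·(1/n − 1/6)², where κ = 2π/243 − 5√3/324. In fact ξ = ζ = 0.001 work. -/
open MeasureTheory Real Filter
open scoped ENNReal RealInnerProductSpace

noncomputable section

/-- The constant `c_n = (1/(2n))·(tan(π/n)/3 + cot(π/n))`. -/
def cPoly (n : ℕ) : ℝ := (1 / (2 * (n : ℝ))) * (Real.tan (π / n) / 3 + Real.cot (π / n))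

/-- The constant `κ = 2π/243 − 5√3/324 = ∂c_n/∂n |_{n=6} < 0`. -/
def kappa : ℝ := 2 * π / 243 - 5 * Real.sqrt 3 / 324

/-! Writing `v = t²`, one has `2t - 3t² + t⁴ = t (t + 2) (t - 1)²`, so for `n = 6` the claim is
`c₆ t (t + 2) (t - 1)² ≥ 0.001 (t - 1)² (t + 1)²`, true as soon as `t` is not tiny; for other `n`
it is perturbed by `(c_n - c₆) t⁴ + κ (6 - n)`, and all that is needed are good lower bounds
on `c_n`.  These come from `c_n = (2 + cos y) / (3 n sin y)` with `y = 2π/n` and Huygens'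
inequality `3 sin y ≤ y (2 + cos y)`, which Taylor expansion to order seven makes quantitative:
`c_n ≥ 1/(2π) + 2π³(3n² - π²)/(135 n⁶)`.  This suffices except at `n = 5`, where
`cos (π/5) = (1 + √5)/4` is used instead, and at `n = 6`, where `c₆` is computed exactly.
What remains for each `n ≤ 7` (and uniformly for `n ≥ 8`) is a quartic inequality in
`t ≥ 0.0122` with numerical coefficients, certified by an explicit nonnegative combination of
squares and of squares times `t - 0.0122`. -/

lemma le_of_hasDerivAt_le {f g f' g' : ℝ → ℝ} (hf : ∀ y, HasDerivAt f (f' y) y)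
    (hg : ∀ y, HasDerivAt g (g' y) y) (h₀ : f 0 ≤ g 0) (hd : ∀ y, 0 ≤ y → f' y ≤ g' y)
    {x : ℝ} (hx : 0 ≤ x) : f x ≤ g x :=
  image_le_of_deriv_right_le_deriv_boundary (fun y _ => (hf y).continuousAt.continuousWithinAt)
    (fun y _ => (hf y).hasDerivWithinAt) h₀ (fun y _ => (hg y).continuousAt.continuousWithinAt)
    (fun y _ => (hg y).hasDerivWithinAt) (fun y hy => hd y hy.1) ⟨hx, le_rfl⟩

namespace Real

variable {x : ℝ}

lemma cos_le_taylor_four (hx : 0 ≤ x) : cos x ≤ 1 - x ^ 2 / 2 + x ^ 4 / 24 :=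
  le_of_hasDerivAt_le (g := fun y => 1 - y ^ 2 / 2 + y ^ 4 / 24) hasDerivAt_cos
    (fun y => (((hasDerivAt_pow 2 y).div_const 2).const_sub 1).add
      ((hasDerivAt_pow 4 y).div_const 24) |>.congr_deriv (by ring))
    (by norm_num) (fun _ hy => neg_le_neg (sin_ge_sub_cube hy)) hx

lemma sin_le_taylor_five (hx : 0 ≤ x) : sin x ≤ x - x ^ 3 / 6 + x ^ 5 / 120 :=
  le_of_hasDerivAt_le (g := fun y => y - y ^ 3 / 6 + y ^ 5 / 120) hasDerivAt_sin
    (fun y => ((hasDerivAt_id y).sub ((hasDerivAt_pow 3 y).div_const 6)).add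
      ((hasDerivAt_pow 5 y).div_const 120) |>.congr_deriv (by ring))
    (by norm_num) (fun _ hy => cos_le_taylor_four hy) hx

lemma taylor_six_le_cos (hx : 0 ≤ x) : 1 - x ^ 2 / 2 + x ^ 4 / 24 - x ^ 6 / 720 ≤ cos x :=
  le_of_hasDerivAt_le (f := fun y => 1 - y ^ 2 / 2 + y ^ 4 / 24 - y ^ 6 / 720)
    (fun y => ((((hasDerivAt_pow 2 y).div_const 2).const_sub 1).add
      ((hasDerivAt_pow 4 y).div_const 24)).sub ((hasDerivAt_pow 6 y).div_const 720)
      |>.congr_deriv (by ring))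
    hasDerivAt_cos (by norm_num) (fun _ hy => neg_le_neg (sin_le_taylor_five hy)) hx

lemma three_mul_sin_add_le (hx : 0 ≤ x) :
    3 * sin x + x ^ 5 / 60 - x ^ 7 / 720 ≤ x * (2 + cos x) := by
  nlinarith [sin_le_taylor_five hx, taylor_six_le_cos hx]

lemma tan_div_three_add_cot (x : ℝ) :
    tan x / 3 + cot x = 2 * (2 + cos (2 * x)) / (3 * sin (2 * x)) := by
  rw [tan_eq_sin_div_cos, cot_eq_cos_div_sin, sin_two_mul, cos_two_mul]
  rcases eq_or_ne (sin x) 0 with hs | hs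
  · simp [hs]
  rcases eq_or_ne (cos x) 0 with hc | hc
  · simp [hc]
  field_simp
  linear_combination sin_sq_add_cos_sq x

end Real

lemma cPoly_eq (n : ℕ) : cPoly n = (2 + cos (2 * π / n)) / (3 * n * sin (2 * π / n)) := by
  rw [cPoly, tan_div_three_add_cot, mul_div_assoc]
  field_simp

lemma one_div_two_pi_add_le_cPoly {n : ℕ} (hn : 3 ≤ n) :
    1 / (2 * π) + 2 * π ^ 3 * (3 * n ^ 2 - π ^ 2) / (135 * n ^ 6) ≤ cPoly n := by
  have hn' : (3 : ℝ) ≤ n := by exact_mod_cast hn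
  set y := 2 * π / n with hy
  have hy₀ : 0 < y := by positivity
  have hyπ : y < π := by
    rw [hy, div_lt_iff₀ (by positivity)]
    nlinarith [pi_pos]
  have hy12 : y ^ 2 < 12 := by nlinarith [pi_lt_d2]
  have key : sin y * (3 + y ^ 4 * (12 - y ^ 2) / 720) ≤ y * (2 + cos y) := by
    nlinarith [three_mul_sin_add_le hy₀.le, sin_le hy₀.le,
      mul_nonneg (pow_nonneg hy₀.le 4) (sub_nonneg.2 hy12.le)]
  have hn_eq : (n : ℝ) = 2 * π / y := by rw [hy]; field_simp
  rw [cPoly_eq, ← hy, le_div_iff₀ (by positivity [sin_pos_of_pos_of_lt_pi hy₀ hyπ]), hn_eq]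
  field_simp
  linear_combination 2160 * key

lemma le_cPoly_of_three_le {n : ℕ} (hn : 3 ≤ n) :
    0.159154 + 62 * (3 * n ^ 2 - 9.87) / (135 * n ^ 6) ≤ cPoly n := by
  have hn' : (3 : ℝ) ≤ n := by exact_mod_cast hn
  have hπ₀ := pi_gt_d4
  have hπ₁ := pi_lt_d4
  refine le_trans ?_ (one_div_two_pi_add_le_cPoly hn)
  gcongr
  · rw [le_div_iff₀ (by positivity)]
    linarith
  · nlinarith
  · linarith [pow_le_pow_left₀ (by norm_num) hπ₀.le 3]
  · nlinarith

lemma cPoly_five_ge : 0.1615 ≤ cPoly 5 := by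
  have h : 2 * π / ((5 : ℕ) : ℝ) = 2 * (π / 5) := by push_cast; ring
  have hcos : cos (2 * (π / 5)) = (√5 - 1) / 4 := by
    rw [cos_two_mul, cos_pi_div_five]
    nlinarith [sq_sqrt (show (0 : ℝ) ≤ 5 by norm_num)]
  have hsin : 0 < sin (2 * (π / 5)) :=
    sin_pos_of_pos_of_lt_pi (by positivity) (by linarith [pi_pos])
  have h5 : 2.236 ≤ √5 := by rw [le_sqrt (by norm_num) (by norm_num)]; norm_num
  rw [cPoly_eq, h, le_div_iff₀ (by positivity), hcos]
  nlinarith [sin_sq_add_cos_sq (2 * (π / 5))]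

lemma cPoly_six : cPoly 6 = c6 := by
  have h : 2 * π / ((6 : ℕ) : ℝ) = π / 3 := by push_cast; ring
  rw [cPoly_eq, h, cos_pi_div_three, sin_pi_div_three, c6]
  field_simp
  linear_combination (-90 : ℝ) * sq_sqrt (show (0 : ℝ) ≤ 3 by norm_num)

lemma sqrt_three_bounds : 1.7320508 ≤ √3 ∧ √3 ≤ 1.73205081 :=
  ⟨by rw [le_sqrt (by norm_num) (by norm_num)]; norm_num,
    by rw [sqrt_le_left (by norm_num)]; norm_num⟩

lemma c6_bounds : 0.16037507 ≤ c6 ∧ c6 ≤ 0.16037508 := by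
  obtain ⟨h₀, h₁⟩ := sqrt_three_bounds
  constructor <;> rw [c6] <;> linarith

lemma kappa_bounds : -0.00087246 ≤ kappa ∧ kappa ≤ -0.00087244 := by
  obtain ⟨h₀, h₁⟩ := sqrt_three_bounds
  constructor <;> rw [kappa] <;> linarith [pi_gt_d6, pi_lt_d6]

/-- The right-hand side minus the left-hand side of the theorem at `v = t²`, with `c_n`
replaced by `c`. -/
def margin (n c t : ℝ) : ℝ :=
  2 * c6 * t + c * t ^ 4 - 3 * c6 * t ^ 2 + kappa * (6 - n) -
    (0.001 * (t ^ 2 - 1) ^ 2 + 0.001 * (1 / n - 1 / 6) ^ 2)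

lemma margin_mono {n c c' t : ℝ} (hc : c ≤ c') : margin n c t ≤ margin n c' t := by
  unfold margin
  nlinarith [mul_le_mul_of_nonneg_right hc (by positivity : (0 : ℝ) ≤ t ^ 4)]

lemma margin_ge {n c t : ℝ} (ht : 0 ≤ t) :
    0.16037507 * (t * (t + 2) * (t - 1) ^ 2) + (c - 0.16037508) * t ^ 4 + kappa * (6 - n) -
      (0.001 * (t ^ 2 - 1) ^ 2 + 0.001 * (1 / n - 1 / 6) ^ 2) ≤ margin n c t := by
  obtain ⟨hc₀, hc₁⟩ := c6_bounds
  unfold margin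
  nlinarith [mul_le_mul_of_nonneg_right hc₀ (by positivity : 0 ≤ t * (t + 2) * (t - 1) ^ 2),
    mul_le_mul_of_nonneg_right hc₁ (by positivity : (0 : ℝ) ≤ t ^ 4)]

lemma margin_three_nonneg {t : ℝ} (ht : 0.0122 ≤ t) : 0 ≤ margin 3 0.169 t := by
  have hm := margin_ge (n := 3) (c := 0.169) (by linarith : 0 ≤ t)
  have hκ := kappa_bounds.1
  linarith [mul_nonneg (sub_nonneg.2 ht) (sq_nonneg (t - 0.9)),
    mul_nonneg (sub_nonneg.2 ht) (sq_nonneg (t - 1.14)), sq_nonneg (t - 1.1),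
    sq_nonneg (t * (t - 0.88)), sq_nonneg (t * (t - 1))]

lemma margin_four_nonneg {t : ℝ} (ht : 0.0122 ≤ t) : 0 ≤ margin 4 0.163 t := by
  have hm := margin_ge (n := 4) (c := 0.163) (by linarith : 0 ≤ t)
  have hκ := kappa_bounds.1
  linarith [mul_nonneg (sub_nonneg.2 ht) (sq_nonneg (t - 0.9)),
    mul_nonneg (sub_nonneg.2 ht) (sq_nonneg (t - 0.96)),
    mul_nonneg (sub_nonneg.2 ht) (sq_nonneg (t - 1.02)), sq_nonneg (t - 0.98),
    sq_nonneg (t * (t - 1))]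

lemma margin_five_nonneg {t : ℝ} (ht : 0.0122 ≤ t) : 0 ≤ margin 5 0.1615 t := by
  have hm := margin_ge (n := 5) (c := 0.1615) (by linarith : 0 ≤ t)
  have hκ := kappa_bounds.1
  linarith [mul_nonneg (sub_nonneg.2 ht) (sq_nonneg (t - 0.96)),
    mul_nonneg (sub_nonneg.2 ht) (sq_nonneg (t - 0.98)),
    mul_nonneg (sub_nonneg.2 ht) (sq_nonneg (t - 1.02)), sq_nonneg (t - 0.98),
    sq_nonneg (t * (t - 1))]

lemma margin_six_nonneg {t : ℝ} (ht : 0.0122 ≤ t) : 0 ≤ margin 6 c6 t := by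
  have h : margin 6 c6 t = (t - 1) ^ 2 * (c6 * (t * (t + 2)) - 0.001 * (t + 1) ^ 2) := by
    unfold margin; ring
  have hc := mul_le_mul_of_nonneg_right c6_bounds.1
    (mul_nonneg (by linarith : 0 ≤ t) (by linarith : 0 ≤ t + 2))
  rw [h]
  exact mul_nonneg (sq_nonneg _) (by nlinarith)

lemma margin_seven_nonneg {t : ℝ} (ht : 0.0122 ≤ t) : 0 ≤ margin 7 0.1596 t := by
  have hm := margin_ge (n := 7) (c := 0.1596) (by linarith : 0 ≤ t)
  have hκ := kappa_bounds.2
  linarith [mul_nonneg (sub_nonneg.2 ht) (sq_nonneg (t - 0.98)),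
    mul_nonneg (sub_nonneg.2 ht) (sq_nonneg (t - 1)),
    mul_nonneg (sub_nonneg.2 ht) (sq_nonneg (t - 1.02)), sq_nonneg (t - 1),
    sq_nonneg (t * (t - 1))]

lemma margin_nonneg_of_eight_le {n t : ℝ} (hn : 8 ≤ n) (ht : 0.0122 ≤ t) :
    0 ≤ margin n 0.1591 t := by
  have hm := margin_ge (n := n) (c := 0.1591) (by linarith : 0 ≤ t)
  have hq : (1 / n - 1 / 6) ^ 2 ≤ 1 / 36 := by
    have : 1 / n ≤ 1 / 8 := one_div_le_one_div_of_le (by norm_num) hn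
    nlinarith [one_div_pos.2 (by linarith : (0 : ℝ) < n)]
  have hκ : 0.00174488 ≤ kappa * (6 - n) := by nlinarith [kappa_bounds.2]
  linarith [mul_nonneg (sub_nonneg.2 ht) (sq_nonneg (t - 0.9)),
    mul_nonneg (sub_nonneg.2 ht) (sq_nonneg (t - 1.02)), sq_nonneg (t - 0.98),
    sq_nonneg (t - 1.1), sq_nonneg (t * (t - 1))]

/-- **Lemma (lower bound on `f`).** There are `ξ, ζ > 0` — in fact `ξ = ζ = 0.001` — such
that for every integer `n ≥ 3` and every `v ≥ 1.5·10⁻⁴`,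
`f(v,n) − 3c₆v + κ(6 − n) ≥ ξ(v − 1)² + ζ(1/n − 1/6)²`, where
`f(v,n) = 2c₆v^(1/2) + c_n v²`. -/
theorem lower_bound_on_f :
    ∃ xi zeta : ℝ, 0 < xi ∧ 0 < zeta ∧ xi = 0.001 ∧ zeta = 0.001 ∧
      ∀ n : ℕ, 3 ≤ n → ∀ v : ℝ, 1.5e-4 ≤ v →
        xi * (v - 1) ^ 2 + zeta * (1 / (n : ℝ) - 1 / 6) ^ 2 ≤
          (2 * c6 * Real.sqrt v + cPoly n * v ^ 2) - 3 * c6 * v + kappa * (6 - (n : ℝ)) := by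
  refine ⟨0.001, 0.001, by norm_num, by norm_num, rfl, rfl, fun n hn v hv => ?_⟩
  obtain ⟨t, ht, rfl⟩ : ∃ t : ℝ, 0.0122 ≤ t ∧ t ^ 2 = v :=
    ⟨√v, (le_sqrt' (by norm_num)).2 (by linarith), sq_sqrt (by linarith)⟩
  suffices ∃ c ≤ cPoly n, 0 ≤ margin n c t by
    obtain ⟨c, hc, h⟩ := this
    have := h.trans (margin_mono hc)
    rw [sqrt_sq (by linarith)]
    unfold margin at this
    linarith
  rcases (by omega : n = 3 ∨ n = 4 ∨ n = 5 ∨ n = 6 ∨ n = 7 ∨ 8 ≤ n)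
    with rfl | rfl | rfl | rfl | rfl | h8
  · exact ⟨0.169, le_trans (by norm_num) (le_cPoly_of_three_le le_rfl),
      by exact_mod_cast margin_three_nonneg ht⟩
  · exact ⟨0.163, le_trans (by norm_num) (le_cPoly_of_three_le (by norm_num)),
      by exact_mod_cast margin_four_nonneg ht⟩
  · exact ⟨0.1615, cPoly_five_ge, by exact_mod_cast margin_five_nonneg ht⟩
  · exact ⟨c6, cPoly_six.ge, by exact_mod_cast margin_six_nonneg ht⟩
  · exact ⟨0.1596, le_trans (by norm_num) (le_cPoly_of_three_le (by norm_num)),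
      by exact_mod_cast margin_seven_nonneg ht⟩
  · have h8' : (8 : ℝ) ≤ n := by exact_mod_cast h8
    refine ⟨0.1591, le_trans ?_ (le_cPoly_of_three_le (by omega)),
      margin_nonneg_of_eight_le h8' ht⟩
    have : 0 ≤ 62 * (3 * (n : ℝ) ^ 2 - 9.87) / (135 * n ^ 6) := by
      have : 0 ≤ 3 * (n : ℝ) ^ 2 - 9.87 := by nlinarith
      positivity
    linarith
end
end

section
/- Define c: (2,∞) → ℝ by c(t) = (1/(2t))·(tan(π/t)/3 + cot(π/t)) and g: (0,∞) × (2,∞) → ℝ by g(v,t) = v²·c(t). Then at every point (v,t) ∈ (0,∞) × (2,∞) one has ∂²g/∂v² = 2·c(t) > 0 and det D²g(v,t) = 8π²·v²·sec²(π/t)/(9·t⁶) > 0; consequently g is convex on the convex set (0,∞) × (2,∞). -/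
open MeasureTheory Real Filter
open scoped ENNReal RealInnerProductSpace

noncomputable section

/-- The extension `c(t) = (1/(2t))·(tan(π/t)/3 + cot(π/t))` of `c_n` to real arguments. -/
def cReal (t : ℝ) : ℝ := (1 / (2 * t)) * (Real.tan (π / t) / 3 + Real.cot (π / t))

/-- The function `g(v,t) = v²·c(t)`. -/
def gfun (v t : ℝ) : ℝ := v ^ 2 * cReal t

/-!
Write `g(v, t) = v² / h(t)` with `h = 1 / c`. Since `(v, y) ↦ v² / y` is jointly convex on
`y > 0` and nonincreasing in `y`, convexity of `g` follows from concavity of the positive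
function `h`, i.e. from `h'' = (2c'² - c c'') / c³ ≤ 0`; and `2v² (c c'' - 2c'²)` is exactly
`det D²g`. With `F(u) = tan u / 3 + cot u` and `c(t) = F(π/t) / (2t)`, one computes
`c c'' - 2c'² = π² / (4t⁶) · (F F'' - 2F'²)(π/t)`, and `F F'' - 2F'² = 16 sec² u / 9` is a
polynomial identity in `tan u` and `cot u` given `tan u · cot u = 1`.
-/

lemma HasDerivAt.comp_const_div {φ : ℝ → ℝ} {φ' a t : ℝ} (hφ : HasDerivAt φ φ' (a / t))
    (ht : t ≠ 0) : HasDerivAt (fun s => φ (a / s)) (-(a * φ') / t ^ 2) t := by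
  have h : HasDerivAt (fun s => a / s) (a * -(t ^ 2)⁻¹) t := by
    simpa only [div_eq_mul_inv] using (hasDerivAt_inv ht).const_mul a
  exact (hφ.comp t h).congr_deriv (by field_simp)

lemma concaveOn_inv_of_hasDerivAt {s : Set ℝ} (hs : IsOpen s) (hconv : Convex ℝ s)
    {f f' f'' : ℝ → ℝ} (hf : ∀ x ∈ s, HasDerivAt f (f' x) x)
    (hf' : ∀ x ∈ s, HasDerivAt f' (f'' x) x) (hpos : ∀ x ∈ s, 0 < f x)
    (hf'' : ∀ x ∈ s, 2 * f' x ^ 2 ≤ f x * f'' x) :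
    ConcaveOn ℝ s fun x => (f x)⁻¹ := by
  have hinv (x) (hx : x ∈ s) : HasDerivAt (fun y => (f y)⁻¹) (-f' x / f x ^ 2) x := by
    simpa only [neg_div] using (hf x hx).fun_inv (hpos x hx).ne'
  refine concaveOn_of_hasDerivWithinAt2_nonpos hconv
    (f' := fun x => -f' x / f x ^ 2) (f'' := fun x => (2 * f' x ^ 2 - f x * f'' x) / f x ^ 3)
    (fun x hx => (hinv x hx).continuousAt.continuousWithinAt) ?_ ?_ ?_ <;> rw [hs.interior_eq]
  · exact fun x hx => (hinv x hx).hasDerivWithinAt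
  · intro x hx
    have hx0 := (hpos x hx).ne'
    have h := (hf' x hx).fun_neg.fun_div ((hf x hx).fun_pow 2) (pow_ne_zero 2 hx0)
    refine h.hasDerivWithinAt.congr_deriv ?_
    field_simp; ring
  · intro x hx
    exact div_nonpos_of_nonpos_of_nonneg (by linarith [hf'' x hx]) (pow_pos (hpos x hx) 3).le

lemma add_sq_div_add_le {x y p q : ℝ} (hp : 0 < p) (hq : 0 < q) :
    (x + y) ^ 2 / (p + q) ≤ x ^ 2 / p + y ^ 2 / q := by
  simpa [Fin.sum_univ_two] using Finset.sq_sum_div_le_sum_sq_div Finset.univ ![x, y]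
    (g := ![p, q]) (by simp [Fin.forall_fin_two, hp, hq])

lemma ConcaveOn.convexOn_sq_div {E : Type*} [AddCommGroup E] [Module ℝ E] {A : Set ℝ}
    {s : Set E} {h : E → ℝ} (hh : ConcaveOn ℝ s h) (hpos : ∀ y ∈ s, 0 < h y)
    (hA : Convex ℝ A) : ConvexOn ℝ (A ×ˢ s) fun p : ℝ × E => p.1 ^ 2 / h p.2 := by
  refine convexOn_iff_forall_pos.2 ⟨hA.prod hh.1, ?_⟩
  rintro ⟨x₁, y₁⟩ ⟨-, hy₁⟩ ⟨x₂, y₂⟩ ⟨-, hy₂⟩ a b ha hb hab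
  have h₁ := hpos y₁ hy₁
  have h₂ := hpos y₂ hy₂
  simp only [Prod.fst_add, Prod.snd_add, Prod.smul_fst, Prod.smul_snd, smul_eq_mul]
  calc (a * x₁ + b * x₂) ^ 2 / h (a • y₁ + b • y₂)
      ≤ (a * x₁ + b * x₂) ^ 2 / (a * h y₁ + b * h y₂) :=
        div_le_div_of_nonneg_left (sq_nonneg _) (by positivity) (hh.2 hy₁ hy₂ ha.le hb.le hab)
    _ ≤ (a * x₁) ^ 2 / (a * h y₁) + (b * x₂) ^ 2 / (b * h y₂) :=
        add_sq_div_add_le (by positivity) (by positivity)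
    _ = a * (x₁ ^ 2 / h y₁) + b * (x₂ ^ 2 / h y₂) := by field_simp

lemma hasDerivAt_tan_eq_one_add_sq {x : ℝ} (hx : cos x ≠ 0) :
    HasDerivAt tan (1 + tan x ^ 2) x := by
  simpa [← inv_one_add_tan_sq hx] using hasDerivAt_tan hx

lemma hasDerivAt_cot {x : ℝ} (hx : sin x ≠ 0) : HasDerivAt cot (-(1 + cot x ^ 2)) x := by
  have h := (hasDerivAt_cos x).div (hasDerivAt_sin x) hx
  rw [show cot = cos / sin from funext cot_eq_cos_div_sin]
  refine h.congr_deriv ?_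
  simp only [Pi.div_apply]
  field_simp
  ring

lemma tan_mul_cot {x : ℝ} (hs : sin x ≠ 0) (hc : cos x ≠ 0) : tan x * cot x = 1 := by
  rw [tan_eq_sin_div_cos, cot_eq_cos_div_sin]
  field_simp

lemma inv_cos_sq_eq_one_add_tan_sq {x : ℝ} (hx : cos x ≠ 0) :
    (cos x)⁻¹ ^ 2 = 1 + tan x ^ 2 := by
  rw [inv_pow, ← inv_one_add_tan_sq hx, inv_inv]

def tanThirdAddCot (u : ℝ) : ℝ := tan u / 3 + cot u

def tanThirdAddCot' (u : ℝ) : ℝ := (1 + tan u ^ 2) / 3 - (1 + cot u ^ 2)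

def tanThirdAddCot'' (u : ℝ) : ℝ :=
  2 * tan u * (1 + tan u ^ 2) / 3 + 2 * cot u * (1 + cot u ^ 2)

lemma tanThirdAddCot_pos {u : ℝ} (hs : 0 < sin u) (hc : 0 < cos u) : 0 < tanThirdAddCot u := by
  rw [tanThirdAddCot, tan_eq_sin_div_cos, cot_eq_cos_div_sin]
  positivity

section

variable {u : ℝ} (hs : sin u ≠ 0) (hc : cos u ≠ 0)
include hs hc

lemma hasDerivAt_tanThirdAddCot : HasDerivAt tanThirdAddCot (tanThirdAddCot' u) u :=
  ((hasDerivAt_tan_eq_one_add_sq hc).div_const 3).add (hasDerivAt_cot hs) |>.congr_deriv <| by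
    rw [tanThirdAddCot']; ring

lemma hasDerivAt_tanThirdAddCot' : HasDerivAt tanThirdAddCot' (tanThirdAddCot'' u) u := by
  have ht := hasDerivAt_tan_eq_one_add_sq hc
  have hk := hasDerivAt_cot hs
  refine ((((ht.pow 2).const_add 1).div_const 3).sub ((hk.pow 2).const_add 1)).congr_deriv ?_
  rw [tanThirdAddCot'']; push_cast; ring

lemma tanThirdAddCot_mul_sub :
    tanThirdAddCot u * tanThirdAddCot'' u - 2 * tanThirdAddCot' u ^ 2 =
      16 / 9 * (1 + tan u ^ 2) := by
  rw [tanThirdAddCot, tanThirdAddCot', tanThirdAddCot'']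
  linear_combination (4 / 3 * (tan u * cot u + 2) + 2 / 3 * (tan u ^ 2 + cot u ^ 2)) *
    tan_mul_cot hs hc

end

lemma cReal_eq_tanThirdAddCot (t : ℝ) : cReal t = tanThirdAddCot (π / t) / (2 * t) := by
  rw [cReal, tanThirdAddCot]; ring

def cReal' (t : ℝ) : ℝ :=
  -(π * tanThirdAddCot' (π / t) / t + tanThirdAddCot (π / t)) / (2 * t ^ 2)

def cReal'' (t : ℝ) : ℝ :=
  (π ^ 2 * tanThirdAddCot'' (π / t) / t ^ 2 + 4 * π * tanThirdAddCot' (π / t) / t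
    + 2 * tanThirdAddCot (π / t)) / (2 * t ^ 3)

lemma pi_div_mem_Ioo_of_two_lt {t : ℝ} (ht : 2 < t) : π / t ∈ Set.Ioo 0 (π / 2) :=
  ⟨by positivity, div_lt_div_of_pos_left pi_pos two_pos ht⟩

section

variable {t : ℝ} (ht : 2 < t)
include ht

lemma sin_pi_div_pos : 0 < sin (π / t) :=
  sin_pos_of_pos_of_lt_pi (pi_div_mem_Ioo_of_two_lt ht).1
    (by linarith [(pi_div_mem_Ioo_of_two_lt ht).2, pi_pos])

lemma cos_pi_div_pos : 0 < cos (π / t) :=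
  cos_pos_of_mem_Ioo
    ⟨by linarith [(pi_div_mem_Ioo_of_two_lt ht).1, pi_pos], (pi_div_mem_Ioo_of_two_lt ht).2⟩

lemma cReal_pos : 0 < cReal t := by
  have := tanThirdAddCot_pos (sin_pi_div_pos ht) (cos_pi_div_pos ht)
  rw [cReal_eq_tanThirdAddCot]
  positivity

lemma hasDerivAt_cReal : HasDerivAt cReal (cReal' t) t := by
  have ht0 : t ≠ 0 := by positivity
  have hF := (hasDerivAt_tanThirdAddCot (sin_pi_div_pos ht).ne'
    (cos_pi_div_pos ht).ne').comp_const_div ht0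
  rw [show cReal = fun s => tanThirdAddCot (π / s) / (2 * s) from funext cReal_eq_tanThirdAddCot]
  refine (hF.div ((hasDerivAt_id' t).const_mul 2) (by positivity)).congr_deriv ?_
  rw [cReal']; field_simp; ring

lemma hasDerivAt_cReal' : HasDerivAt cReal' (cReal'' t) t := by
  have ht0 : t ≠ 0 := by positivity
  have hs := (sin_pi_div_pos ht).ne'
  have hc := (cos_pi_div_pos ht).ne'
  have hF := (hasDerivAt_tanThirdAddCot hs hc).comp_const_div ht0
  have hF' := (hasDerivAt_tanThirdAddCot' hs hc).comp_const_div ht0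
  have hnum := ((hF'.const_mul π).fun_div (hasDerivAt_id' t) ht0).fun_add hF
  have hden := (hasDerivAt_pow 2 t).const_mul (2 : ℝ)
  refine (hnum.fun_neg.fun_div hden (by positivity)).congr_deriv ?_
  rw [cReal'']; field_simp; ring

lemma cReal_mul_cReal''_sub :
    cReal t * cReal'' t - 2 * cReal' t ^ 2 =
      4 * π ^ 2 * (cos (π / t))⁻¹ ^ 2 / (9 * t ^ 6) := by
  have ht0 : t ≠ 0 := by positivity
  have hc := (cos_pi_div_pos ht).ne'
  have hperspective : cReal t * cReal'' t - 2 * cReal' t ^ 2 = π ^ 2 / (4 * t ^ 6) *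
      (tanThirdAddCot (π / t) * tanThirdAddCot'' (π / t) - 2 * tanThirdAddCot' (π / t) ^ 2) := by
    rw [cReal_eq_tanThirdAddCot, cReal', cReal'']; field_simp; ring
  rw [hperspective, tanThirdAddCot_mul_sub (sin_pi_div_pos ht).ne' hc,
    inv_cos_sq_eq_one_add_tan_sq hc]
  field_simp; ring

end
lemma concaveOn_inv_cReal : ConcaveOn ℝ (Set.Ioi 2) fun t => (cReal t)⁻¹ := by
  refine concaveOn_inv_of_hasDerivAt isOpen_Ioi (convex_Ioi 2) (fun t ht => hasDerivAt_cReal ht)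
    (fun t ht => hasDerivAt_cReal' ht) (fun t ht => cReal_pos ht) fun t ht => ?_
  have hcos := cos_pi_div_pos ht
  have ht0 : 0 < t := two_pos.trans ht
  have hdet : 0 < cReal t * cReal'' t - 2 * cReal' t ^ 2 := by
    rw [cReal_mul_cReal''_sub ht]; positivity
  linarith

lemma hasDerivAt_gfun_fst (v t : ℝ) : HasDerivAt (fun w => gfun w t) (2 * v * cReal t) v := by
  unfold gfun
  simpa using (hasDerivAt_pow 2 v).mul_const (cReal t)

lemma hasDerivAt_gfun_snd (v : ℝ) {t : ℝ} (ht : 2 < t) :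
    HasDerivAt (fun s => gfun v s) (v ^ 2 * cReal' t) t :=
  (hasDerivAt_cReal ht).const_mul (v ^ 2)

lemma deriv_deriv_gfun_fst (v t : ℝ) :
    deriv (fun w => deriv (fun w' => gfun w' t) w) v = 2 * cReal t := by
  simp only [fun w => (hasDerivAt_gfun_fst w t).deriv]
  exact (((hasDerivAt_id' v).const_mul 2).mul_const (cReal t)).deriv.trans (by ring)

lemma deriv_deriv_gfun_fst_snd (v : ℝ) {t : ℝ} (ht : 2 < t) :
    deriv (fun s => deriv (fun w => gfun w s) v) t = 2 * v * cReal' t := by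
  simp only [fun s => (hasDerivAt_gfun_fst v s).deriv]
  exact ((hasDerivAt_cReal ht).const_mul (2 * v)).deriv

lemma deriv_deriv_gfun_snd (v : ℝ) {t : ℝ} (ht : 2 < t) :
    deriv (fun s => deriv (fun s' => gfun v s') s) t = v ^ 2 * cReal'' t := by
  have h : (fun s => deriv (fun s' => gfun v s') s) =ᶠ[nhds t] fun s => v ^ 2 * cReal' s := by
    filter_upwards [Ioi_mem_nhds ht] with s hs using (hasDerivAt_gfun_snd v hs).deriv
  rw [h.deriv_eq]
  exact ((hasDerivAt_cReal' ht).const_mul (v ^ 2)).deriv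

/-- **Convexity of `g(v,t) = v²c(t)` on `(0,∞) × (2,∞)`.** At every point, `∂²g/∂v² = 2c(t) > 0`
and `det D²g = 8π²v²sec²(π/t)/(9t⁶) > 0`; consequently `g` is convex on `(0,∞) × (2,∞)`. -/
theorem g_is_convex :
    (∀ v ∈ Set.Ioi (0 : ℝ), ∀ t ∈ Set.Ioi (2 : ℝ),
      (deriv (fun w : ℝ => deriv (fun w' : ℝ => gfun w' t) w) v = 2 * cReal t ∧
        0 < 2 * cReal t) ∧
      (deriv (fun w : ℝ => deriv (fun w' : ℝ => gfun w' t) w) v *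
          deriv (fun s : ℝ => deriv (fun s' : ℝ => gfun v s') s) t -
          (deriv (fun s : ℝ => deriv (fun w : ℝ => gfun w s) v) t) ^ 2 =
            8 * π ^ 2 * v ^ 2 * ((Real.cos (π / t))⁻¹) ^ 2 / (9 * t ^ 6) ∧
        0 < 8 * π ^ 2 * v ^ 2 * ((Real.cos (π / t))⁻¹) ^ 2 / (9 * t ^ 6))) ∧
    ConvexOn ℝ (Set.Ioi (0 : ℝ) ×ˢ Set.Ioi (2 : ℝ)) (fun p : ℝ × ℝ => gfun p.1 p.2) := by
  refine ⟨fun v hv t ht => ?_, ?_⟩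
  · rw [deriv_deriv_gfun_fst, deriv_deriv_gfun_snd v ht, deriv_deriv_gfun_fst_snd v ht]
    have hc := cReal_pos ht
    have hcos := cos_pi_div_pos ht
    have ht0 : 0 < t := two_pos.trans ht
    have hv : 0 < v := hv
    refine ⟨⟨rfl, by positivity⟩, ?_, by positivity⟩
    linear_combination (2 * v ^ 2) * cReal_mul_cReal''_sub ht
  · simpa only [gfun, div_inv_eq_mul] using
      concaveOn_inv_cReal.convexOn_sq_div (fun t ht => inv_pos.2 (cReal_pos ht)) (convex_Ioi 0)
end
end

section
/- Let λ > 0, let Ω ⊂ ℝ² have Lebesgue area 1, let μ be a minimizer of E_λ among admissible atomic measures on Ω_λ with support Z, and let T be an optimal transport map for W(L_{Ω_λ}, μ). Set m₀ = 2.4095·10⁻⁴ and R₀ = 3.2143. Assume that μ({z}) ≥ m₀ for every z ∈ Z and that for every x ∈ Ω_λ there exists z̃ ∈ Z with |x − z̃| ≤ R₀. Then for every z ∈ Z the essential diameter of the cell T⁻¹({z}) is at most D₀, where D₀² = 4·(c₆·m₀^{−1/2} + R₀²). -/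
open MeasureTheory Real Filter
open scoped ENNReal RealInnerProductSpace

noncomputable section

/-- `(Z, v)` is a minimizer of `E_λ` among admissible atomic measures on `Ω_λ`. -/
def IsMinimizer (lam : ℝ) (Omlam : Set Plane) (Z : Finset Plane) (v : Plane → ℝ) : Prop :=
  Admissible lam Omlam Z v ∧
    ∀ (Z' : Finset Plane) (v' : Plane → ℝ), Admissible lam Omlam Z' v' →
      energy Omlam Z v ≤ energy Omlam Z' v'

/-- The essential diameter of a measurable set: the infimum of `diam (A \\ N)` over
Lebesgue-null sets `N`. -/
def essDiam (A : Set Plane) : ℝ :=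
  sInf {d : ℝ | ∃ N : Set Plane, volume N = 0 ∧ d = Metric.diam (A \ N)}

/-! Put `r² = c₆ m₀^(-1/2) + R₀²`. If a non-null part of the cell of `z` lay at distance `≥ ρ > r`
from `z`, it would contain a measurable piece `S` of mass `0 < δ < v z` within `R₀` of some atom
`z' ≠ z`. Sending `S` to `z'` instead raises the transport cost by at most `δ (R₀² - ρ²)` and, by
concavity of `√` and `v z' ≥ m₀`, the weight term by at most `c₆ δ m₀^(-1/2)`: the energy drops by
`δ (ρ² - r²) > 0`, contradicting minimality. So the cell lies a.e. in the closed ball of radius `r`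
about `z`, of diameter `2r = D₀`. -/

open Metric Bornology Set

theorem c6_pos : 0 < c6 := by
  unfold c6
  positivity

theorem Real.sqrt_add_le_sqrt_add_div {a δ m : ℝ} (hm : 0 < m) (hma : m ≤ a) (hδ : 0 ≤ δ) :
    √(a + δ) ≤ √a + δ / (2 * √m) := by
  have hsm : 0 < √m := Real.sqrt_pos.2 hm
  have ha : √a ^ 2 = a := Real.sq_sqrt (hm.le.trans hma)
  have hδa : δ ≤ 2 * √a * (δ / (2 * √m)) := by
    rw [show 2 * √a * (δ / (2 * √m)) = δ * (√a / √m) by field_simp]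
    exact le_mul_of_one_le_right hδ ((one_le_div hsm).2 (Real.sqrt_le_sqrt hma))
  rw [Real.sqrt_le_left (by positivity)]
  nlinarith [sq_nonneg (δ / (2 * √m))]

section MoveMass

variable {α : Type*} [DecidableEq α]

def moveMass (v : α → ℝ) (z z' : α) (δ : ℝ) (w : α) : ℝ :=
  v w - (if w = z then δ else 0) + (if w = z' then δ else 0)

theorem sum_sqrt_moveMass_le {Z : Finset α} {v : α → ℝ} {z z' : α} (hz' : z' ∈ Z) {m δ : ℝ}
    (hm : 0 < m) (hmv : m ≤ v z') (hδ : 0 ≤ δ) :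
    ∑ w ∈ Z, √(moveMass v z z' δ w) ≤ ∑ w ∈ Z, √(v w) + δ / (2 * √m) := by
  have hpt : ∀ w, √(moveMass v z z' δ w) ≤ √(v w) + if w = z' then δ / (2 * √m) else 0 := by
    intro w
    have hle : moveMass v z z' δ w ≤ v w + if w = z' then δ else 0 := by
      unfold moveMass
      split_ifs <;> linarith
    refine (Real.sqrt_le_sqrt hle).trans ?_
    split_ifs with hw
    · subst hw
      exact Real.sqrt_add_le_sqrt_add_div hm hmv hδ
    · simp
  calc ∑ w ∈ Z, √(moveMass v z z' δ w)
      ≤ ∑ w ∈ Z, (√(v w) + if w = z' then δ / (2 * √m) else 0) :=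
        Finset.sum_le_sum fun w _ => hpt w
    _ = ∑ w ∈ Z, √(v w) + δ / (2 * √m) := by
      rw [Finset.sum_add_distrib, Finset.sum_ite_eq', if_pos hz']

theorem measureReal_piecewise_preimage_singleton {X : Type*} [MeasurableSpace X]
    [MeasurableSpace α] [MeasurableSingletonClass α] {μ : Measure X} [IsFiniteMeasure μ]
    {T : X → α} (hT : Measurable T) {S : Set X} [DecidablePred (· ∈ S)] (hS : MeasurableSet S)
    {z z' : α} (hSz : S ⊆ T ⁻¹' {z}) (hne : z' ≠ z) (w : α) :
    μ.real (S.piecewise (fun _ => z') T ⁻¹' {w}) =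
      moveMass (fun u => μ.real (T ⁻¹' {u})) z z' (μ.real S) w := by
  have hdisj : ∀ u ≠ z, T ⁻¹' {u} \ S = T ⁻¹' {u} := fun u hu =>
    ((disjoint_singleton.2 hu).preimage T).mono_right hSz |>.sdiff_eq_left
  rw [piecewise_preimage, Set.ite, moveMass]
  by_cases hwz' : w = z'
  · subst hwz'
    rw [preimage_const_of_mem (mem_singleton w), univ_inter, hdisj w hne, if_neg hne, if_pos rfl,
      measureReal_union (disjoint_of_subset_left hSz ((disjoint_singleton.2 hne.symm).preimage T))
        (hT (measurableSet_singleton w))]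
    ring
  have hz'w : z' ∉ ({w} : Set α) := Ne.symm hwz'
  rw [preimage_const_of_notMem hz'w, empty_inter, empty_union, if_neg hwz']
  by_cases hwz : w = z
  · subst hwz
    rw [measureReal_sdiff hSz hS, if_pos rfl]
    ring
  · rw [hdisj w hwz, if_neg hwz]
    ring

end MoveMass

theorem admissible_moveMass {lam : ℝ} {O : Set Plane} {Z : Finset Plane} {v : Plane → ℝ}
    (h : Admissible lam O Z v) {z z' : Plane} (hz : z ∈ Z) (hz' : z' ∈ Z) (hne : z' ≠ z)
    {δ : ℝ} (hδ : 0 ≤ δ) (hδv : δ < v z) : Admissible lam O Z (moveMass v z z' δ) := by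
  obtain ⟨hZO, hpos, hsum⟩ := h
  refine ⟨hZO, fun w hw => ?_, ?_⟩
  · have := hpos w hw
    unfold moveMass
    split_ifs with h1 h2 h2
    · exact absurd (h2.symm.trans h1) hne
    · subst h1; linarith
    · linarith
    · linarith
  · simp only [moveMass, Finset.sum_add_distrib, Finset.sum_sub_distrib, Finset.sum_ite_eq', hz,
      hz', if_true]
    linarith

section MeasureLemmas

variable {α : Type*} [MeasurableSpace α] {μ : Measure α}

theorem exists_measurableSet_subset_measure_pos_lt [MetricSpace α] [SecondCountableTopology α]
    [OpensMeasurableSpace α] [IsFiniteMeasure μ] [NullSingletonClass μ] {s : Set α}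
    (hs : MeasurableSet s) (h : μ s ≠ 0) {ε : ℝ≥0∞} (hε : 0 < ε) :
    ∃ t ⊆ s, MeasurableSet t ∧ 0 < μ t ∧ μ t < ε := by
  have hsmall : ∀ x : α, ∃ r > 0, μ (ball x r) < ε := by
    intro x
    have hlim := tendsto_measure_thickening (μ := μ) (s := {x}) ⟨1, one_pos, measure_ne_top _ _⟩
    rw [closure_singleton, measure_singleton] at hlim
    obtain ⟨r, hr, hrpos⟩ := ((hlim.eventually (gt_mem_nhds hε)).and self_mem_nhdsWithin).exists
    exact ⟨r, hrpos, by rwa [thickening_singleton] at hr⟩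
  choose r hr hrε using hsmall
  obtain ⟨C, hC, hCU⟩ :=
    TopologicalSpace.isOpen_iUnion_countable (fun x => ball x (r x)) fun _ => isOpen_ball
  have hcover : s ⊆ ⋃ x ∈ C, s ∩ ball x (r x) := by
    intro y hy
    have : y ∈ ⋃ x ∈ C, ball x (r x) := hCU ▸ mem_iUnion.2 ⟨y, mem_ball_self (hr y)⟩
    simpa [hy] using this
  obtain ⟨x, -, hx⟩ : ∃ x ∈ C, μ (s ∩ ball x (r x)) ≠ 0 := by
    by_contra! h0
    exact h (measure_mono_null hcover ((measure_biUnion_null_iff hC).2 h0))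
  exact ⟨s ∩ ball x (r x), inter_subset_left, hs.inter measurableSet_ball, pos_iff_ne_zero.2 hx,
    (measure_mono inter_subset_right).trans_lt (hrε x)⟩

theorem exists_measure_inter_closedBall_ne_zero [PseudoMetricSpace α] {Z : Finset α} {R : ℝ}
    (hcover : ∀ᵐ x ∂μ, ∃ z ∈ Z, dist x z ≤ R) {s : Set α} (hs : μ s ≠ 0) :
    ∃ z ∈ Z, μ (s ∩ closedBall z R) ≠ 0 := by
  by_contra! h0
  refine hs (measure_mono_null_ae ?_ ((measure_biUnion_null_iff Z.countable_toSet).2 h0))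
  filter_upwards [hcover] with x ⟨z, hz, hxz⟩ hxs
  exact mem_biUnion hz ⟨hxs, hxz⟩

theorem integral_piecewise_le_add [IsFiniteMeasure μ] {f g : α → ℝ} {s : Set α}
    [DecidablePred (· ∈ s)] (hs : MeasurableSet s) (hf : Integrable f μ) (hg : Integrable g μ)
    {c : ℝ} (hgf : ∀ x ∈ s, g x ≤ f x + c) :
    ∫ x, s.piecewise g f x ∂μ ≤ ∫ x, f x ∂μ + c * μ.real s := by
  have hs_int : ∫ x in s, g x ∂μ ≤ ∫ x in s, (f x + c) ∂μ :=
    setIntegral_mono_on hg.integrableOn (hf.integrableOn.add (integrable_const c).integrableOn)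
      hs hgf
  rw [integral_add hf.integrableOn (integrable_const c).integrableOn, setIntegral_const,
    smul_eq_mul] at hs_int
  rw [integral_piecewise hs hg.integrableOn hf.integrableOn, ← integral_add_compl hs hf]
  linarith

theorem measure_diff_closedBall_eq_zero [PseudoMetricSpace α] {A : Set α} {z : α} {r : ℝ}
    (h : ∀ ρ > r, μ (A ∩ {x | ρ ≤ dist x z}) = 0) : μ (A \ closedBall z r) = 0 := by
  refine measure_mono_null (fun x ⟨hxA, hx⟩ => ?_)
    (measure_iUnion_null fun n : ℕ => h (r + 1 / (n + 1)) (by simp; positivity))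
  have hxz : r < dist x z := not_le.1 hx
  obtain ⟨n, hn⟩ := exists_nat_one_div_lt (sub_pos.2 hxz)
  exact mem_iUnion.2 ⟨n, hxA, show r + 1 / (n + 1) ≤ dist x z by linarith⟩

end MeasureLemmas

theorem integrable_norm_sub_sq_of_mapsTo {E : Type*} [NormedAddCommGroup E] [MeasurableSpace E]
    [BorelSpace E] [SecondCountableTopology E] {μ : Measure E} {O : Set E} (hO : IsBounded O)
    (hOμ : μ O ≠ ∞) {Z : Finset E} {U : E → E} (hU : Measurable U) (hUZ : ∀ x ∈ O, U x ∈ Z) :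
    Integrable (fun x => ‖x - U x‖ ^ 2) (μ.restrict O) := by
  have := isFiniteMeasure_restrict.2 hOμ
  obtain ⟨C, hC⟩ := isBounded_iff.1 (hO.union Z.finite_toSet.isBounded)
  have hmeas : Measurable fun x => ‖x - U x‖ ^ 2 := (measurable_id.sub hU).norm.pow_const 2
  have hbound : ∀ᵐ x ∂μ.restrict O, x ∈ {x | ‖x - U x‖ ^ 2 ≤ C ^ 2} := by
    refine ae_restrict_of_ae_restrict_of_subset (fun x hx => ?_)
      (ae_restrict_mem (measurableSet_le hmeas measurable_const))
    rw [show x ∈ {x | ‖x - U x‖ ^ 2 ≤ C ^ 2} ↔ ‖x - U x‖ ^ 2 ≤ C ^ 2 from Iff.rfl, ← dist_eq_norm]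
    exact pow_le_pow_left₀ dist_nonneg (hC (Or.inl hx) (Or.inr (hUZ x hx))) 2
  refine Integrable.of_bound hmeas.aestronglyMeasurable (C ^ 2) ?_
  filter_upwards [hbound] with x hx
  rwa [Real.norm_of_nonneg (by positivity)]

-- `O` need not be measurable; the cells of a measurable `T` are measured by `volume.restrict O`.
theorem volume_cell_eq_restrict {O : Set Plane} {T : Plane → Plane} (hT : Measurable T)
    (z : Plane) : volume {x | x ∈ O ∧ T x = z} = volume.restrict O (T ⁻¹' {z}) := by
  rw [Measure.restrict_apply (hT (measurableSet_singleton z))]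
  congr 1
  ext x
  simp [and_comm]

theorem IsTransportMap.piecewise {O : Set Plane} {Z : Finset Plane} {v : Plane → ℝ}
    {T : Plane → Plane} (hT : IsTransportMap O Z v T) (hO : volume O ≠ ∞) {S : Set Plane}
    [DecidablePred (· ∈ S)] (hS : MeasurableSet S) {z z' : Plane} (hSz : S ⊆ T ⁻¹' {z})
    (hz' : z' ∈ Z) (hne : z' ≠ z) :
    IsTransportMap O Z (moveMass v z z' ((volume.restrict O).real S))
      (S.piecewise (fun _ => z') T) := by
  obtain ⟨hTm, hTZ, hTv⟩ := hT
  have := isFiniteMeasure_restrict.2 hO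
  have hT'm : Measurable (S.piecewise (fun _ => z') T) := measurable_const.piecewise hS hTm
  refine ⟨hT'm, fun x hx => ?_, fun w hw => ?_⟩
  · by_cases hxS : x ∈ S <;> simp [hxS, hz', hTZ x hx]
  · have hcell : ∀ u ∈ Z, (volume.restrict O).real (T ⁻¹' {u}) = v u := fun u hu => by
      rw [← hTv u hu, volume_cell_eq_restrict hTm]
      rfl
    rw [volume_cell_eq_restrict hT'm, ← measureReal_def,
      measureReal_piecewise_preimage_singleton hTm hS hSz hne]
    simp only [moveMass, hcell w hw]

theorem transportCost_le_integral {O : Set Plane} {Z : Finset Plane} {v : Plane → ℝ}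
    {T : Plane → Plane} (hT : IsTransportMap O Z v T) :
    transportCost O Z v ≤ ∫ x in O, ‖x - T x‖ ^ 2 :=
  csInf_le ⟨0, by rintro c ⟨U, -, rfl⟩; exact integral_nonneg fun x => by positivity⟩ ⟨T, hT, rfl⟩

theorem energy_moveMass_le {O : Set Plane} {Z : Finset Plane} {v : Plane → ℝ}
    {T : Plane → Plane} (hT : IsTransportMap O Z v T) (hO : IsBounded O) {S : Set Plane}
    [DecidablePred (· ∈ S)] (hS : MeasurableSet S) {z z' : Plane} (hSz : S ⊆ T ⁻¹' {z})
    (hz' : z' ∈ Z) (hne : z' ≠ z) {m c : ℝ} (hm0 : 0 < m) (hm : m ≤ v z')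
    (hc : ∀ x ∈ S, ‖x - z'‖ ^ 2 ≤ ‖x - T x‖ ^ 2 + c) :
    energy O Z (moveMass v z z' ((volume.restrict O).real S)) ≤
      2 * c6 * ∑ w ∈ Z, √(v w) + (∫ x in O, ‖x - T x‖ ^ 2) +
        (volume.restrict O).real S * (c6 * (√m)⁻¹ + c) := by
  have hOfin : volume O ≠ ∞ := (hO.measure_lt_top (μ := volume)).ne
  have := isFiniteMeasure_restrict.2 hOfin
  have hsqrt := mul_le_mul_of_nonneg_left (sum_sqrt_moveMass_le (z := z) hz' hm0 hm
    (measureReal_nonneg (μ := volume.restrict O) (s := S))) (by linarith [c6_pos] : 0 ≤ 2 * c6)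
  have hcost : ∫ x in O, ‖x - S.piecewise (fun _ => z') T x‖ ^ 2 ≤
      (∫ x in O, ‖x - T x‖ ^ 2) + c * (volume.restrict O).real S := by
    have hpw : ∀ x, ‖x - S.piecewise (fun _ => z') T x‖ ^ 2 =
        S.piecewise (fun x => ‖x - z'‖ ^ 2) (fun x => ‖x - T x‖ ^ 2) x := fun x => by
      by_cases hx : x ∈ S <;> simp [hx]
    simp only [hpw]
    refine integral_piecewise_le_add (μ := volume.restrict O) hS ?_ ?_ hc
    · exact integrable_norm_sub_sq_of_mapsTo hO hOfin hT.1 hT.2.1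
    · exact integrable_norm_sub_sq_of_mapsTo hO hOfin measurable_const fun _ _ => hz'
  have hW := transportCost_le_integral (hT.piecewise hOfin hS hSz hz' hne)
  have hsplit : 2 * c6 * ((volume.restrict O).real S / (2 * √m)) =
      (volume.restrict O).real S * (c6 * (√m)⁻¹) := by
    field_simp
  unfold energy
  linarith

theorem IsMinimizer.volume_cell_inter_far_eq_zero {lam : ℝ} {O : Set Plane} {Z : Finset Plane}
    {v : Plane → ℝ} {T : Plane → Plane} {m R ρ : ℝ} (hmin : IsMinimizer lam O Z v)
    (hT : IsTransportMap O Z v T) (hopt : ∫ x in O, ‖x - T x‖ ^ 2 = transportCost O Z v)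
    (hm0 : 0 < m) (hm : ∀ z ∈ Z, m ≤ v z) (hcover : ∀ x ∈ O, ∃ z ∈ Z, dist x z ≤ R)
    (hρ0 : 0 ≤ ρ) (hρ : c6 * (√m)⁻¹ + R ^ 2 < ρ ^ 2) {z : Plane} (hz : z ∈ Z) :
    volume ({x | x ∈ O ∧ T x = z} ∩ {x | ρ ≤ dist x z}) = 0 := by
  classical
  set F := T ⁻¹' {z} ∩ {x | ρ ≤ dist x z}
  have hFm : MeasurableSet F := (hT.1 (measurableSet_singleton z)).inter
    (measurableSet_le measurable_const (measurable_id.dist measurable_const))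
  have hOB : O ⊆ ⋃ w ∈ Z, closedBall w R := fun x hx => by
    obtain ⟨w, hw, hxw⟩ := hcover x hx
    exact mem_biUnion hw hxw
  have hO : IsBounded O :=
    ((isBounded_biUnion_finset Z).2 fun _ _ => isBounded_closedBall).subset hOB
  have := isFiniteMeasure_restrict.2 (hO.measure_lt_top (μ := volume)).ne
  have hcover_ae : ∀ᵐ x ∂volume.restrict O, ∃ w ∈ Z, dist x w ≤ R :=
    (ae_restrict_of_ae_restrict_of_subset hOB
      (ae_restrict_mem (Z.measurableSet_biUnion fun _ _ => measurableSet_closedBall))).mono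
      fun x hx => by simpa using hx
  rw [show {x | x ∈ O ∧ T x = z} ∩ {x | ρ ≤ dist x z} = F ∩ O by ext; simp [F]; tauto,
    ← Measure.restrict_apply hFm]
  by_contra hF
  obtain ⟨z', hz', hFz'⟩ := exists_measure_inter_closedBall_ne_zero hcover_ae hF
  obtain ⟨S, hSF, hSm, hSpos, hSv⟩ := exists_measurableSet_subset_measure_pos_lt
    (hFm.inter measurableSet_closedBall) hFz' (ENNReal.ofReal_pos.2 (hmin.1.2.1 z hz))
  have hSF' : ∀ x ∈ S, T x = z ∧ ρ ≤ dist x z ∧ dist x z' ≤ R := fun x hx =>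
    ⟨(hSF hx).1.1, (hSF hx).1.2, (hSF hx).2⟩
  have hSpt : ∀ x ∈ S, ‖x - z'‖ ^ 2 ≤ ‖x - T x‖ ^ 2 + (R ^ 2 - ρ ^ 2) := fun x hx => by
    obtain ⟨hTx, hρx, hxR⟩ := hSF' x hx
    rw [← dist_eq_norm, ← dist_eq_norm, hTx]
    nlinarith [dist_nonneg (x := x) (y := z')]
  have hne : z' ≠ z := by
    rintro rfl
    obtain ⟨x, hx⟩ := nonempty_of_measure_ne_zero hSpos.ne'
    obtain ⟨-, hρx, hxR⟩ := hSF' x hx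
    nlinarith [c6_pos, inv_pos.2 (Real.sqrt_pos.2 hm0)]
  have hδ : 0 < (volume.restrict O).real S := ENNReal.toReal_pos hSpos.ne' (measure_ne_top _ S)
  have hE := (hmin.2 Z _ (admissible_moveMass hmin.1 hz hz' hne hδ.le
    (ENNReal.toReal_lt_of_lt_ofReal hSv))).trans
    (energy_moveMass_le hT hO hSm (fun x hx => (hSF hx).1.1) hz' hne hm0 (hm z' hz') hSpt)
  rw [energy, ← hopt] at hE
  linarith [mul_pos hδ (sub_pos.2 hρ)]

theorem essDiam_le_of_volume_diff_closedBall_eq_zero {A : Set Plane} {z : Plane} {r : ℝ}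
    (hr : 0 ≤ r) (hA : volume (A \ closedBall z r) = 0) : essDiam A ≤ 2 * r := by
  have hbdd : BddBelow {d : ℝ | ∃ N : Set Plane, volume N = 0 ∧ d = diam (A \ N)} :=
    ⟨0, by rintro d ⟨N, -, rfl⟩; exact diam_nonneg⟩
  calc essDiam A ≤ diam (A \ (A \ closedBall z r)) := csInf_le hbdd ⟨_, hA, rfl⟩
    _ ≤ diam (closedBall z r) := by
      rw [sdiff_sdiff_right_self]
      exact diam_mono inter_subset_right isBounded_closedBall
    _ ≤ 2 * r := diam_closedBall hr

theorem cell_diameter_bound_general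
    (lam : ℝ) (Omega : Set Plane)
    (Z : Finset Plane) (v : Plane → ℝ)
    (hmin : IsMinimizer lam (scaledDomain lam Omega) Z v)
    (T : Plane → Plane) (hT : IsTransportMap (scaledDomain lam Omega) Z v T)
    (hopt : (∫ x in scaledDomain lam Omega, ‖x - T x‖ ^ 2) =
      transportCost (scaledDomain lam Omega) Z v)
    (hm : ∀ z ∈ Z, (2.4095e-4 : ℝ) ≤ v z)
    (hcover : ∀ x ∈ scaledDomain lam Omega, ∃ z ∈ Z, dist x z ≤ (3.2143 : ℝ)) :
    ∃ D0 : ℝ, 0 ≤ D0 ∧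
      D0 ^ 2 = 4 * (c6 * (Real.sqrt (2.4095e-4 : ℝ))⁻¹ + (3.2143 : ℝ) ^ 2) ∧
      ∀ z ∈ Z, essDiam {x | x ∈ scaledDomain lam Omega ∧ T x = z} ≤ D0 := by
  set r := √(c6 * (√(2.4095e-4 : ℝ))⁻¹ + (3.2143 : ℝ) ^ 2)
  have hr0 : 0 ≤ r := Real.sqrt_nonneg _
  have hr2 : r ^ 2 = c6 * (√(2.4095e-4 : ℝ))⁻¹ + (3.2143 : ℝ) ^ 2 :=
    Real.sq_sqrt (by have := c6_pos; positivity)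
  refine ⟨2 * r, by positivity, by rw [mul_pow, hr2]; norm_num, fun z hz => ?_⟩
  refine essDiam_le_of_volume_diff_closedBall_eq_zero (z := z) hr0
    (measure_diff_closedBall_eq_zero fun ρ hρ => ?_)
  exact hmin.volume_cell_inter_far_eq_zero hT hopt (by norm_num) hm hcover (hr0.trans hρ.le)
    (by nlinarith) hz

/-- **Lemma (diameter bound for transport cells).** Let `μ` minimize `E_λ`, let `T` be an
optimal transport map, suppose every weight is at least `m₀ = 2.4095·10⁻⁴` and every point of
`Ω_λ` is within distance `R₀ = 3.2143` of the support. Then every transport cell has essential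
diameter at most `D₀`, where `D₀² = 4(c₆·m₀^(−1/2) + R₀²)`. -/
theorem cell_diameter_bound
    (lam : ℝ) (hlam : 0 < lam) (Omega : Set Plane) (harea : volume Omega = 1)
    (Z : Finset Plane) (v : Plane → ℝ)
    (hmin : IsMinimizer lam (scaledDomain lam Omega) Z v)
    (T : Plane → Plane) (hT : IsTransportMap (scaledDomain lam Omega) Z v T)
    (hopt : (∫ x in scaledDomain lam Omega, ‖x - T x‖ ^ 2) =
      transportCost (scaledDomain lam Omega) Z v)
    (hm : ∀ z ∈ Z, (2.4095e-4 : ℝ) ≤ v z)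
    (hcover : ∀ x ∈ scaledDomain lam Omega, ∃ z ∈ Z, dist x z ≤ (3.2143 : ℝ)) :
    ∃ D0 : ℝ, 0 ≤ D0 ∧
      D0 ^ 2 = 4 * (c6 * (Real.sqrt (2.4095e-4 : ℝ))⁻¹ + (3.2143 : ℝ) ^ 2) ∧
      ∀ z ∈ Z, essDiam {x | x ∈ scaledDomain lam Omega ∧ T x = z} ≤ D0 :=
  cell_diameter_bound_general lam Omega Z v hmin T hT hopt hm hcover
end
end
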